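/- arXiv:1410.7930 — 10 statements merged into one kernel-verified Lean document; each statement's English description precedes it below -/
import Mathlib

section
/- Let X be a dcpo equipped with its Scott topology and let O(X) denote its lattice of Scott-open sets. The map C ↦ (U ↦ (U ∩ C is nonempty)) is an order isomorphism from the complete lattice of Scott-closed subsets of X, ordered by inclusion, onto the poset (ordered pointwise) of all maps φ : O(X) → Prop satisfying: φ(∅) = False; φ(U ∪ V) = φ(U) ∨ φ(V) for all opens U, V; and φ(⋃ᵢ Uᵢ) = (∃ i, φ(Uᵢ)) for every nonempty directed family (Uᵢ) of opens. -/
open Set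

/-- A dcpo: every nonempty directed subset has a least upper bound. -/
def IsDcpo (α : Type*) [Preorder α] : Prop :=
  ∀ d : Set α, d.Nonempty → DirectedOn (· ≤ ·) d → ∃ a, IsLUB d a

/-- A subset of a poset is Scott-open if it is an upper set and every nonempty directed set
whose supremum lies in it meets it. -/
def IsScottOpen {X : Type*} [Preorder X] (U : Set X) : Prop :=
  IsUpperSet U ∧
    ∀ d : Set X, d.Nonempty → DirectedOn (· ≤ ·) d → ∀ a, IsLUB d a → a ∈ U →
      (d ∩ U).Nonempty

/-- Scott-closed sets are the complements of Scott-open sets. -/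
def IsScottClosed {X : Type*} [Preorder X] (C : Set X) : Prop :=
  IsScottOpen Cᶜ

/-- The lattice `O(X)` of Scott-open subsets of `X`. -/
abbrev ScottOpens (X : Type*) [Preorder X] : Type _ := {U : Set X // IsScottOpen U}

/-- The elements of the Hoare powerdomain in functional form: maps `φ : O(X) → Prop` with
`φ(∅) = False`, `φ(U ∪ V) = φ(U) ∨ φ(V)` and `φ(⋃ᵢ Uᵢ) = ∃ i, φ(Uᵢ)` for nonempty directed
families of opens. -/
def IsHoareFunctional {X : Type*} [Preorder X] (φ : ScottOpens X → Prop) : Prop :=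
  (∀ U : ScottOpens X, U.1 = (∅ : Set X) → ¬ φ U) ∧
  (∀ U V W : ScottOpens X, W.1 = U.1 ∪ V.1 → (φ W ↔ φ U ∨ φ V)) ∧
  (∀ S : Set (ScottOpens X), S.Nonempty → DirectedOn (· ≤ ·) S →
    ∀ W : ScottOpens X, W.1 = ⋃ U ∈ S, U.1 → (φ W ↔ ∃ U ∈ S, φ U))


section Aux
variable {X : Type*} [Preorder X]

lemma isScottOpen_empty : IsScottOpen (∅ : Set X) :=
  ⟨fun _ _ _ h => h, fun _ _ _ a _ ha => absurd ha (Set.notMem_empty a)⟩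

lemma isScottOpen_biUnion (S : Set (ScottOpens X)) :
    IsScottOpen (⋃ U ∈ S, U.1) := by
  constructor
  · intro x y hxy hx
    simp only [Set.mem_iUnion] at hx ⊢
    obtain ⟨U, hU, hxU⟩ := hx
    exact ⟨U, hU, U.2.1 hxy hxU⟩
  · intro d hd hdir a ha haU
    simp only [Set.mem_iUnion] at haU
    obtain ⟨U, hU, haU⟩ := haU
    obtain ⟨x, hxd, hxU⟩ := U.2.2 d hd hdir a ha haU
    exact ⟨x, hxd, Set.mem_iUnion.mpr ⟨U, Set.mem_iUnion.mpr ⟨hU, hxU⟩⟩⟩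

lemma isScottOpen_union (U V : ScottOpens X) : IsScottOpen (U.1 ∪ V.1) := by
  have := isScottOpen_biUnion ({U, V} : Set (ScottOpens X))
  simpa using this

lemma hoare_mono {φ : ScottOpens X → Prop} (hφ : IsHoareFunctional φ)
    {U V : ScottOpens X} (h : U.1 ⊆ V.1) (hU : φ U) : φ V :=
  (hφ.2.1 U V V (Set.union_eq_self_of_subset_left h).symm).mpr (Or.inl hU)

/-- The key: every Hoare functional is of the form `U ↦ (U ∩ C).Nonempty`. -/
lemma hoare_repr {φ : ScottOpens X → Prop} (hφ : IsHoareFunctional φ) (U : ScottOpens X) :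
    φ U ↔ (U.1 ∩ (⋃ V ∈ {V : ScottOpens X | ¬ φ V}, V.1)ᶜ).Nonempty := by
  set S : Set (ScottOpens X) := {V : ScottOpens X | ¬ φ V}
  have hempty : (⟨∅, isScottOpen_empty⟩ : ScottOpens X) ∈ S := hφ.1 _ rfl
  have hS : S.Nonempty := ⟨_, hempty⟩
  have hdir : DirectedOn (· ≤ ·) S := by
    intro A hA B hB
    refine ⟨⟨A.1 ∪ B.1, isScottOpen_union A B⟩, ?_, Set.subset_union_left,
      Set.subset_union_right⟩
    intro h
    rcases (hφ.2.1 A B _ rfl).mp h with h' | h'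
    · exact hA h'
    · exact hB h'
  set Umax : ScottOpens X := ⟨⋃ V ∈ S, V.1, isScottOpen_biUnion S⟩
  have hnot : ¬ φ Umax := by
    rw [hφ.2.2 S hS hdir Umax rfl]
    rintro ⟨V, hV, hφV⟩
    exact hV hφV
  constructor
  · intro hU
    by_contra h
    rw [Set.not_nonempty_iff_eq_empty, ← Set.disjoint_iff_inter_eq_empty,
      Set.disjoint_compl_right_iff_subset] at h
    exact hnot (hoare_mono hφ h hU)
  · rintro ⟨x, hxU, hxC⟩
    by_contra h
    exact hxC (Set.mem_iUnion.mpr ⟨U, Set.mem_iUnion.mpr ⟨h, hxU⟩⟩)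

lemma hoare_of_closed {C : Set X} :
    IsHoareFunctional (fun U : ScottOpens X => (U.1 ∩ C).Nonempty) := by
  refine ⟨?_, ?_, ?_⟩
  · intro U hU
    show ¬ (U.1 ∩ C).Nonempty
    rw [hU]
    simp
  · intro U V W hW
    show (W.1 ∩ C).Nonempty ↔ (U.1 ∩ C).Nonempty ∨ (V.1 ∩ C).Nonempty
    rw [hW, Set.union_inter_distrib_right, Set.union_nonempty]
  · intro S _ _ W hW
    show (W.1 ∩ C).Nonempty ↔ ∃ U ∈ S, (U.1 ∩ C).Nonempty
    rw [hW]
    constructor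
    · rintro ⟨x, hx, hxC⟩
      simp only [Set.mem_iUnion] at hx
      obtain ⟨U, hU, hxU⟩ := hx
      exact ⟨U, hU, x, hxU, hxC⟩
    · rintro ⟨U, hU, x, hxU, hxC⟩
      exact ⟨x, Set.mem_iUnion.mpr ⟨U, Set.mem_iUnion.mpr ⟨hU, hxU⟩⟩, hxC⟩

end Aux

/-- For a dcpo `X`, the map `C ↦ (U ↦ (U ∩ C).Nonempty)` is an order isomorphism from the
complete lattice of Scott-closed subsets of `X` (ordered by inclusion) onto the poset of
Hoare functionals `O(X) → Prop` (ordered pointwise, `Prop` ordered by implication). -/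
theorem scottCloseds_orderIso_hoareFunctionals {X : Type*} [PartialOrder X] (hX : IsDcpo X) :
    ∃ e : {C : Set X // IsScottClosed C} ≃o {φ : ScottOpens X → Prop // IsHoareFunctional φ},
      ∀ (C : {C : Set X // IsScottClosed C}) (U : ScottOpens X),
        (e C).1 U ↔ (U.1 ∩ C.1).Nonempty := by
  classical
  set toF : {C : Set X // IsScottClosed C} → {φ : ScottOpens X → Prop // IsHoareFunctional φ} :=
    fun C => ⟨fun U => (U.1 ∩ C.1).Nonempty, hoare_of_closed⟩ with htoF
  set invF : {φ : ScottOpens X → Prop // IsHoareFunctional φ} → {C : Set X // IsScottClosed C} :=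
    fun φ => ⟨(⋃ V ∈ {V : ScottOpens X | ¬ φ.1 V}, V.1)ᶜ, by
      show IsScottOpen _
      rw [compl_compl]
      exact isScottOpen_biUnion _⟩ with hinvF
  have key : ∀ φ : {φ : ScottOpens X → Prop // IsHoareFunctional φ},
      ∀ U : ScottOpens X, φ.1 U ↔ (U.1 ∩ (invF φ).1).Nonempty := fun φ U => hoare_repr φ.2 U
  have right_inv : ∀ φ, toF (invF φ) = φ := by
    intro φ
    apply Subtype.ext
    funext U
    exact propext ((key φ U).symm)
  have left_inv : ∀ C, invF (toF C) = C := by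
    intro C
    apply Subtype.ext
    show (⋃ V ∈ {V : ScottOpens X | ¬ (V.1 ∩ C.1).Nonempty}, V.1)ᶜ = C.1
    have heq : (⋃ V ∈ {V : ScottOpens X | ¬ (V.1 ∩ C.1).Nonempty}, V.1) = C.1ᶜ := by
      apply Set.Subset.antisymm
      · intro x hx
        simp only [Set.mem_iUnion] at hx
        obtain ⟨V, hV, hxV⟩ := hx
        intro hxC
        exact hV ⟨x, hxV, hxC⟩
      · intro x hx
        refine Set.mem_iUnion.mpr ⟨⟨C.1ᶜ, C.2⟩, Set.mem_iUnion.mpr ⟨?_, hx⟩⟩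
        simp [Set.inter_comm]
    rw [heq, compl_compl]
  have hmono : ∀ C C' : {C : Set X // IsScottClosed C},
      toF C ≤ toF C' ↔ C ≤ C' := by
    intro C C'
    constructor
    · intro h x hxC
      by_contra hx
      have h1 : ((⟨C'.1ᶜ, C'.2⟩ : ScottOpens X).1 ∩ C.1).Nonempty := ⟨x, hx, hxC⟩
      have h2 : ((⟨C'.1ᶜ, C'.2⟩ : ScottOpens X).1 ∩ C'.1).Nonempty := h _ h1
      obtain ⟨y, hy1, hy2⟩ := h2
      exact hy1 hy2
    · intro h U hU
      obtain ⟨x, hxU, hxC⟩ := hU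
      exact ⟨x, hxU, h hxC⟩
  refine ⟨⟨⟨toF, invF, left_inv, right_inv⟩, ?_⟩, fun C U => Iff.rfl⟩
  intro C C'
  exact hmono C C'
end

section
/- Let X and Y be dcpos, each equipped with its Scott topology, and let H(Y) denote the complete lattice of Scott-closed subsets of Y ordered by inclusion. There is a bijection between (i) Scott-continuous maps t : X → H(Y) and (ii) maps s : Opens(Y) → Opens(X) between the lattices of Scott-open sets that preserve arbitrary unions (equivalently: are Scott-continuous, preserve binary unions, and send ∅ to ∅); the correspondence is given by s(V) = {x ∈ X | V ∩ t(x) is nonempty}, and this set is indeed Scott-open for each Scott-open V. -/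
open Set

/-- The complete lattice `H(X)` of Scott-closed subsets of `X`, ordered by inclusion. -/
abbrev ScottCloseds (X : Type*) [Preorder X] : Type _ := {C : Set X // IsScottClosed C}

/-- A map between the Scott-open-set lattices preserves arbitrary unions. -/
def PreservesUnions {X Y : Type*} [Preorder X] [Preorder Y]
    (s : ScottOpens Y → ScottOpens X) : Prop :=
  ∀ (S : Set (ScottOpens Y)) (W : ScottOpens Y), W.1 = ⋃ V ∈ S, V.1 →
    ((s W).1 = ⋃ V ∈ S, (s V).1)

section Aux
variable {X Y : Type*} [PartialOrder X] [PartialOrder Y]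

lemma isScottOpen_biUnion_s6 (S : Set (ScottOpens Y)) : IsScottOpen (⋃ V ∈ S, V.1) := by
  constructor
  · intro a b hab ha
    rcases mem_iUnion₂.1 ha with ⟨V, hV, haV⟩
    exact mem_iUnion₂.2 ⟨V, hV, V.2.1 hab haV⟩
  · intro d hd hdir a hlub ha
    rcases mem_iUnion₂.1 ha with ⟨V, hV, haV⟩
    rcases V.2.2 d hd hdir a hlub haV with ⟨x, hxd, hxV⟩
    exact ⟨x, hxd, mem_iUnion₂.2 ⟨V, hV, hxV⟩⟩

lemma pres_mono {s : ScottOpens Y → ScottOpens X} (hs : PreservesUnions s)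
    {V W : ScottOpens Y} (h : V.1 ⊆ W.1) : (s V).1 ⊆ (s W).1 := by
  have hW : W.1 = ⋃ U ∈ ({V, W} : Set (ScottOpens Y)), U.1 := by
    apply Subset.antisymm
    · intro y hy; exact mem_iUnion₂.2 ⟨W, Or.inr rfl, hy⟩
    · intro y hy
      rcases mem_iUnion₂.1 hy with ⟨U, hU, hyU⟩
      rcases hU with h1 | h1 <;> subst h1
      · exact h hyU
      · exact hyU
  have := hs {V, W} W hW
  rw [this]
  intro x hx; exact mem_iUnion₂.2 ⟨V, Or.inl rfl, hx⟩

/-- The family of opens avoided by `x` under `s`. -/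
def avoidSet (s : ScottOpens Y → ScottOpens X) (x : X) : Set (ScottOpens Y) :=
  {V | x ∉ (s V).1}

/-- The candidate closed set `t(x)` built from `s`. -/
def tInv (s : ScottOpens Y → ScottOpens X) (x : X) : Set Y :=
  (⋃ V ∈ avoidSet s x, V.1)ᶜ

lemma tInv_closed (s : ScottOpens Y → ScottOpens X) (x : X) :
    IsScottClosed (tInv s x) := by
  unfold IsScottClosed tInv
  rw [compl_compl]
  exact isScottOpen_biUnion_s6 _

lemma key_equiv {s : ScottOpens Y → ScottOpens X} (hs : PreservesUnions s)
    (V : ScottOpens Y) (x : X) :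
    x ∈ (s V).1 ↔ (V.1 ∩ tInv s x).Nonempty := by
  constructor
  · intro hx
    by_contra hne
    rw [not_nonempty_iff_eq_empty] at hne
    have hsub : V.1 ⊆ ⋃ U ∈ avoidSet s x, U.1 := by
      intro y hy
      by_contra hyc
      exact (eq_empty_iff_forall_notMem.1 hne y) ⟨hy, hyc⟩
    set W : ScottOpens Y := ⟨⋃ U ∈ avoidSet s x, U.1, isScottOpen_biUnion_s6 _⟩ with hWdef
    have hxW : x ∉ (s W).1 := by
      rw [hs (avoidSet s x) W rfl]
      intro hmem
      rcases mem_iUnion₂.1 hmem with ⟨U, hU, hxU⟩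
      exact hU hxU
    exact hxW (pres_mono hs hsub hx)
  · rintro ⟨y, hyV, hyt⟩
    by_contra hx
    exact hyt (mem_iUnion₂.2 ⟨V, hx, hyV⟩)

lemma tInv_mono {s : ScottOpens Y → ScottOpens X} (x x' : X)
    (h : x ≤ x') : tInv s x ⊆ tInv s x' := by
  apply compl_subset_compl.2
  intro y hy
  rcases mem_iUnion₂.1 hy with ⟨V, hV, hyV⟩
  refine mem_iUnion₂.2 ⟨V, ?_, hyV⟩
  intro hx; exact hV ((s V).2.1 h hx)

lemma tInv_scottContinuous {s : ScottOpens Y → ScottOpens X} (hs : PreservesUnions s) :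
    ScottContinuous (fun x => (⟨tInv s x, tInv_closed s x⟩ : ScottCloseds Y)) := by
  intro d hd hdir a hlub
  constructor
  · rintro _ ⟨x, hxd, rfl⟩
    exact tInv_mono x a (hlub.1 hxd)
  · intro C hC
    show tInv s a ⊆ C.1
    have hCub : ∀ x ∈ d, tInv s x ⊆ C.1 := by
      intro x hx
      exact hC ⟨x, hx, rfl⟩
    -- C.1ᶜ is Scott-open
    set U : ScottOpens Y := ⟨C.1ᶜ, C.2⟩ with hU
    have haU : a ∉ (s U).1 := by
      intro haU
      rcases (s U).2.2 d hd hdir a hlub haU with ⟨x, hxd, hxU⟩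
      rcases (key_equiv hs U x).1 hxU with ⟨y, hyU, hyt⟩
      exact hyU (hCub x hxd hyt)
    intro y hy
    by_contra hyC
    exact hy (mem_iUnion₂.2 ⟨U, haU, hyC⟩)

lemma part1 {X Y : Type*} [PartialOrder X] [PartialOrder Y]
    (t : X → ScottCloseds Y) (ht : ScottContinuous t) (V : ScottOpens Y) :
    IsScottOpen {x : X | (V.1 ∩ (t x).1).Nonempty} := by
  constructor
  · rintro x x' hxx' ⟨y, hyV, hyt⟩
    exact ⟨y, hyV, ht.monotone hxx' hyt⟩
  · rintro d hd hdir a hlub ⟨y, hyV, hyt⟩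
    have hlub' := ht hd hdir hlub
    by_contra hne
    rw [not_nonempty_iff_eq_empty] at hne
    have hub : (⟨V.1ᶜ, by unfold IsScottClosed; rw [compl_compl]; exact V.2⟩ : ScottCloseds Y)
        ∈ upperBounds (t '' d) := by
      rintro _ ⟨x, hxd, rfl⟩
      intro z hz
      intro hzV
      exact (eq_empty_iff_forall_notMem.1 hne x) ⟨hxd, ⟨z, hzV, hz⟩⟩
    exact (hlub'.2 hub) hyt hyV

lemma sMap_preserves {X Y : Type*} [PartialOrder X] [PartialOrder Y]
    (t : X → ScottCloseds Y) (ht : ScottContinuous t) :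
    PreservesUnions (fun V => (⟨{x : X | (V.1 ∩ (t x).1).Nonempty}, part1 t ht V⟩ :
      ScottOpens X)) := by
  intro S W hW
  ext x
  simp only [mem_setOf_eq, hW, mem_iUnion₂]
  constructor
  · rintro ⟨y, hyW, hyt⟩
    rcases mem_iUnion₂.1 hyW with ⟨V, hV, hyV⟩
    exact ⟨V, hV, y, hyV, hyt⟩
  · rintro ⟨V, hV, y, hyV, hyt⟩
    exact ⟨y, mem_iUnion₂.2 ⟨V, hV, hyV⟩, hyt⟩

end Aux

lemma left_aux {X Y : Type*} [PartialOrder X] [PartialOrder Y]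
    (t : X → ScottCloseds Y) (ht : ScottContinuous t) (x : X) :
    tInv (fun V => (⟨{x : X | (V.1 ∩ (t x).1).Nonempty}, part1 t ht V⟩ : ScottOpens X)) x
      = (t x).1 := by
  unfold tInv avoidSet
  rw [← compl_compl (t x).1]
  congr 1
  ext y
  simp only [mem_iUnion₂, mem_compl_iff, mem_setOf_eq]
  constructor
  · rintro ⟨V, hV, hyV⟩ hyt
    exact hV ⟨y, hyV, hyt⟩
  · intro hyt
    refine ⟨⟨(t x).1ᶜ, (t x).2⟩, ?_, hyt⟩
    rintro ⟨z, hz1, hz2⟩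
    exact hz1 hz2


/-- For dcpos `X`, `Y`: if `t : X → H(Y)` is Scott-continuous then for every Scott-open `V`
the set `{x | V ∩ t(x) ≠ ∅}` is Scott-open, and `t ↦ s`, `s(V) = {x | (V ∩ t(x)).Nonempty}`,
is a bijection between the Scott-continuous maps `X → H(Y)` and the union-preserving maps
`Opens Y → Opens X`. -/
theorem hoare_state_predicate_bijection {X Y : Type*} [PartialOrder X] [PartialOrder Y]
    (hX : IsDcpo X) (hY : IsDcpo Y) :
    (∀ t : X → ScottCloseds Y, ScottContinuous t → ∀ V : ScottOpens Y,
      IsScottOpen {x : X | (V.1 ∩ (t x).1).Nonempty}) ∧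
    ∃ e : {t : X → ScottCloseds Y // ScottContinuous t} ≃
          {s : ScottOpens Y → ScottOpens X // PreservesUnions s},
      ∀ (t : {t : X → ScottCloseds Y // ScottContinuous t}) (V : ScottOpens Y) (x : X),
        x ∈ ((e t).1 V).1 ↔ (V.1 ∩ (t.1 x).1).Nonempty := by

  refine ⟨fun t ht V => part1 t ht V, ?_⟩
  refine ⟨⟨fun t => ⟨fun V => ⟨{x : X | (V.1 ∩ (t.1 x).1).Nonempty}, part1 t.1 t.2 V⟩,
      sMap_preserves t.1 t.2⟩,
    fun s => ⟨fun x => ⟨tInv s.1 x, tInv_closed s.1 x⟩, tInv_scottContinuous s.2⟩,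
    ?_, ?_⟩, fun t V x => Iff.rfl⟩
  · rintro ⟨t, ht⟩
    apply Subtype.ext
    funext x
    exact Subtype.ext (left_aux t ht x)
  · rintro ⟨s, hs⟩
    apply Subtype.ext
    funext V
    apply Subtype.ext
    ext x
    exact (key_equiv hs V x).symm
end

section
/- Let X be a dcpo and let C be a Scott-closed subset of X. Then the family of sets of the form ↓x₁ ∪ ⋯ ∪ ↓xₙ with x₁, …, xₙ ∈ C (n ≥ 0, the empty union being ∅) consists of Scott-closed sets, is directed under inclusion, and its union equals C. Consequently, C is the supremum of this directed family in the complete lattice of Scott-closed subsets of X, so every Scott-closed set lies in the smallest collection of Scott-closed sets that contains ∅ and all principal ideals ↓x and is closed under binary unions and suprema of directed families. -/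
open Set

/-- The family of finite unions `↓x₁ ∪ ⋯ ∪ ↓xₙ` of principal ideals of elements of `C`
(`n ≥ 0`, the empty union being `∅`). -/
def FinIdealUnions {X : Type*} [Preorder X] (C : Set X) : Set (Set X) :=
  {A | ∃ F : Finset X, ↑F ⊆ C ∧ A = ⋃ x ∈ F, {y | y ≤ x}}

section Aux
variable {X : Type*} [Preorder X]

lemma isScottClosed_empty : IsScottClosed (∅ : Set X) := by
  constructor
  · simp [IsUpperSet]
  · intro d hd _ a _ _
    simpa using hd

lemma isScottClosed_Iic (x : X) : IsScottClosed {y : X | y ≤ x} := by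
  constructor
  · intro a b hab ha hb
    exact ha (hab.trans hb)
  · intro d hd _ a ha hax
    by_contra h
    have : ∀ y ∈ d, y ≤ x := by
      intro y hy
      by_contra hy'
      exact h ⟨y, hy, hy'⟩
    exact hax (ha.2 this)

lemma isScottClosed_union {A B : Set X} (hA : IsScottClosed A) (hB : IsScottClosed B) :
    IsScottClosed (A ∪ B) := by
  constructor
  · rw [Set.compl_union]
    exact fun a b hab ha => ⟨hA.1 hab ha.1, hB.1 hab ha.2⟩
  · intro d hd hdir a ha hac
    rw [Set.compl_union] at hac
    obtain ⟨u, hu, huA⟩ := hA.2 d hd hdir a ha hac.1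
    obtain ⟨v, hv, hvB⟩ := hB.2 d hd hdir a ha hac.2
    obtain ⟨w, hw, huw, hvw⟩ := hdir u hu v hv
    exact ⟨w, hw, Set.compl_union A B ▸ ⟨hA.1 huw huA, hB.1 hvw hvB⟩⟩

lemma isScottClosed_finsetUnion (F : Finset X) :
    IsScottClosed (⋃ x ∈ F, {y : X | y ≤ x}) := by
  classical
  induction F using Finset.induction with
  | empty => simpa using isScottClosed_empty
  | @insert a F ha ih =>
      rw [Finset.set_biUnion_insert]
      exact isScottClosed_union (isScottClosed_Iic a) ih

lemma IsScottClosed.lower {C : Set X} (hC : IsScottClosed C) : IsLowerSet C := by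
  intro a b hba ha
  by_contra hb
  exact (hC.1 hba hb) ha

end Aux


lemma union_finIdealUnions {X : Type*} [Preorder X] (C : Set X) (hC : IsScottClosed C) :
    ⋃₀ FinIdealUnions C = C := by
  apply Set.Subset.antisymm
  · rintro z ⟨A, ⟨F, hF, rfl⟩, hz⟩
    simp only [Set.mem_iUnion] at hz
    obtain ⟨x, hxF, hzx⟩ := hz
    exact hC.lower hzx (hF hxF)
  · intro x hx
    refine ⟨{y | y ≤ x}, ⟨{x}, by simpa, by simp⟩, le_refl x⟩

lemma lub_finIdealUnions {X : Type*} [Preorder X] (C : Set X) (hC : IsScottClosed C) :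
    IsLUB {A : ScottCloseds X | A.1 ∈ FinIdealUnions C} ⟨C, hC⟩ := by
  constructor
  · rintro A hA
    change A.1 ≤ C
    intro z hz
    exact union_finIdealUnions C hC ▸ ⟨A.1, hA, hz⟩
  · intro W hW
    change C ≤ W.1
    intro x hx
    have : (⟨{y | y ≤ x}, isScottClosed_Iic x⟩ : ScottCloseds X) ∈
        {A : ScottCloseds X | A.1 ∈ FinIdealUnions C} := ⟨{x}, by simpa, by simp⟩
    exact hW this (le_refl x)

/-- For a Scott-closed subset `C` of a dcpo `X`: the finite unions of principal ideals of
elements of `C` are Scott-closed, form a directed family whose union is `C`, and `C` is the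
supremum of this family in the lattice of Scott-closed sets; consequently every Scott-closed
set lies in the smallest collection of Scott-closed sets containing `∅` and all principal
ideals `↓x` which is closed under binary unions and suprema of directed families. -/
theorem scottClosed_generated_by_principal_ideals {X : Type*} [PartialOrder X]
    (hX : IsDcpo X) (C : Set X) (hC : IsScottClosed C) :
    (∀ A ∈ FinIdealUnions C, IsScottClosed A) ∧
    (FinIdealUnions C).Nonempty ∧
    DirectedOn (· ⊆ ·) (FinIdealUnions C) ∧
    ⋃₀ FinIdealUnions C = C ∧
    IsLUB {A : ScottCloseds X | A.1 ∈ FinIdealUnions C} ⟨C, hC⟩ ∧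
    (∀ G : Set (ScottCloseds X),
      (∀ A : ScottCloseds X, A.1 = (∅ : Set X) → A ∈ G) →
      (∀ (x : X) (A : ScottCloseds X), A.1 = {y | y ≤ x} → A ∈ G) →
      (∀ A B W : ScottCloseds X, A ∈ G → B ∈ G → W.1 = A.1 ∪ B.1 → W ∈ G) →
      (∀ S : Set (ScottCloseds X), S.Nonempty → S ⊆ G → DirectedOn (· ≤ ·) S →
        ∀ W : ScottCloseds X, IsLUB S W → W ∈ G) →
      ∀ D : ScottCloseds X, D ∈ G) := by
  classical
  have closed : ∀ A ∈ FinIdealUnions C, IsScottClosed A := by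
    rintro A ⟨F, -, rfl⟩
    exact isScottClosed_finsetUnion F
  have mem_empty : ∀ (C' : Set X), (∅ : Set X) ∈ FinIdealUnions C' := by
    intro C'
    exact ⟨∅, by simp, by simp⟩
  have nonempty : (FinIdealUnions C).Nonempty := ⟨∅, mem_empty C⟩
  have directed : ∀ C' : Set X, DirectedOn (· ⊆ ·) (FinIdealUnions C') := by
    rintro C' A ⟨F, hF, rfl⟩ B ⟨F', hF', rfl⟩
    refine ⟨(⋃ x ∈ F ∪ F', {y | y ≤ x}), ⟨F ∪ F', ?_, rfl⟩, ?_, ?_⟩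
    · rw [Finset.coe_union]; exact Set.union_subset hF hF'
    · intro z hz
      simp only [Set.mem_iUnion] at hz ⊢
      obtain ⟨x, hx, h⟩ := hz
      exact ⟨x, Finset.mem_union_left _ hx, h⟩
    · intro z hz
      simp only [Set.mem_iUnion] at hz ⊢
      obtain ⟨x, hx, h⟩ := hz
      exact ⟨x, Finset.mem_union_right _ hx, h⟩
  have union_eq := union_finIdealUnions C hC
  have lub := lub_finIdealUnions C hC
  refine ⟨closed, nonempty, directed C, union_eq, lub, ?_⟩
  intro G h0 h1 hbin hdirsup D
  -- every finite union of ideals (as a ScottCloseds) is in G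
  have key : ∀ F : Finset X, ∀ A : ScottCloseds X,
      A.1 = ⋃ x ∈ F, {y : X | y ≤ x} → A ∈ G := by
    intro F
    induction F using Finset.induction with
    | empty => intro A hA; exact h0 A (by simpa using hA)
    | @insert a F ha ih =>
        intro A hA
        refine hbin ⟨{y | y ≤ a}, isScottClosed_Iic a⟩
          ⟨⋃ x ∈ F, {y | y ≤ x}, isScottClosed_finsetUnion F⟩ A
          (h1 a _ rfl) (ih _ rfl) ?_
        rw [hA, Finset.set_biUnion_insert]
  -- the family for D
  set S : Set (ScottCloseds X) := {A : ScottCloseds X | A.1 ∈ FinIdealUnions D.1} with hS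
  have closedD : ∀ A ∈ FinIdealUnions D.1, IsScottClosed A := by
    rintro A ⟨F, -, rfl⟩
    exact isScottClosed_finsetUnion F
  have hSne : S.Nonempty := ⟨⟨∅, isScottClosed_empty⟩, mem_empty D.1⟩
  have hSG : S ⊆ G := by
    rintro A ⟨F, -, hA⟩
    exact key F A hA
  have hSdir : DirectedOn (· ≤ ·) S := by
    intro A hA B hB
    obtain ⟨E, hE, hAE, hBE⟩ := directed D.1 A.1 hA B.1 hB
    exact ⟨⟨E, closedD E hE⟩, hE, hAE, hBE⟩
  have hlubD : IsLUB S D := by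
    have h := lub_finIdealUnions D.1 D.2
    simpa [hS] using h
  exact hdirsup S hSne hSG hSdir D hlubD
end

section
/- Let X and Y be dcpos with their Scott topologies, Y sober (T0 and quasi-sober), and let S(Y) denote the set of compact saturated subsets of Y (including ∅) ordered by reverse inclusion. There is a bijection between (i) maps t : X → S(Y) that are Scott-continuous in the sense that x ≤ x' implies t(x') ⊆ t(x) and t(sup D) = ⋂_{x ∈ D} t(x) for every nonempty directed D ⊆ X, and (ii) maps s : Opens(Y) → Opens(X) between the Scott-open-set lattices satisfying s(Y) = X, s(U ∩ V) = s(U) ∩ s(V), and s(⋃ᵢ Uᵢ) = ⋃ᵢ s(Uᵢ) for every nonempty directed family (Uᵢ); the correspondence is given by s(V) = {x ∈ X | t(x) ⊆ V}. -/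
open Set TopologicalSpace

/-- A subset of a topological space is saturated if it equals the intersection of the open
sets containing it. -/
def IsSaturatedSet {Z : Type*} [TopologicalSpace Z] (K : Set Z) : Prop :=
  K = ⋂₀ {U : Set Z | IsOpen U ∧ K ⊆ U}

section HM
variable {Z : Type*} [TopologicalSpace Z]

lemma sat_mem {K : Set Z} (hK : IsSaturatedSet K) {y : Z}
    (h : ∀ U : Set Z, IsOpen U → K ⊆ U → y ∈ U) : y ∈ K := by
  rw [hK]; exact fun U hU => h U hU.1 hU.2

/-- Hofmann–Mislove, part 1: a filtered family of compact saturated sets whose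
intersection lies in an open set has a member inside that open set. -/
lemma HM1 [QuasiSober Z] (F : Set (Set Z)) (hne : F.Nonempty)
    (hdir : DirectedOn (· ⊇ ·) F)
    (hcs : ∀ K ∈ F, IsCompact K ∧ IsSaturatedSet K)
    (U : Set Z) (hU : IsOpen U) (hsub : ⋂₀ F ⊆ U) : ∃ K ∈ F, K ⊆ U := by
  by_contra hcon
  push_neg at hcon
  -- every K ∈ F meets Uᶜ
  have hmeet : ∀ K ∈ F, (K ∩ Uᶜ).Nonempty := by
    intro K hK
    rcases not_subset.1 (hcon K hK) with ⟨z, hzK, hzU⟩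
    exact ⟨z, hzK, hzU⟩
  set S : Set (Set Z) := {C | IsClosed C ∧ C ⊆ Uᶜ ∧ ∀ K ∈ F, (K ∩ C).Nonempty} with hS
  have hUc : Uᶜ ∈ S := ⟨hU.isClosed_compl, Subset.rfl, hmeet⟩
  have hzorn : ∀ c ⊆ S, IsChain (· ⊆ ·) c → c.Nonempty → ∃ lb ∈ S, ∀ s ∈ c, lb ⊆ s := by
    intro c hcS hchain hcne
    refine ⟨⋂₀ c, ⟨isClosed_sInter fun C hC => (hcS hC).1, ?_, ?_⟩,
      fun s hs => sInter_subset_of_mem hs⟩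
    · obtain ⟨C, hC⟩ := hcne
      exact (sInter_subset_of_mem hC).trans (hcS hC).2.1
    · intro K hKF
      have hKcomp := (hcs K hKF).1
      rw [sInter_eq_iInter]
      refine hKcomp.inter_iInter_nonempty (fun i : c => (i : Set Z))
        (fun i => (hcS i.2).1) (fun u => ?_)
      rcases u.eq_empty_or_nonempty with rfl | hune
      · simp only [Finset.notMem_empty, iInter_of_empty, iInter_univ, inter_univ]
        obtain ⟨C, hC⟩ := hcne
        obtain ⟨z, hz, _⟩ := (hcS hC).2.2 K hKF
        exact ⟨z, hz⟩
      · -- a finite subset of a chain has a least element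
        have : ∃ i₀ ∈ u, ∀ i ∈ u, (i₀ : Set Z) ⊆ i := by
          classical
          induction u using Finset.induction_on with
          | empty => exact absurd hune (by simp)
          | @insert a s ha ih =>
            rcases s.eq_empty_or_nonempty with rfl | hsne
            · exact ⟨a, Finset.mem_insert_self a _, by
                intro i hi
                rcases Finset.mem_insert.1 hi with rfl | h
                · exact Subset.rfl
                · exact absurd h (Finset.notMem_empty i)⟩
            · obtain ⟨i₀, hi₀s, hi₀⟩ := ih hsne
              rcases hchain.total a.2 i₀.2 with h | h
              · exact ⟨a, Finset.mem_insert_self a _, fun i hi => by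
                  rcases Finset.mem_insert.1 hi with rfl | hh
                  · exact Subset.rfl
                  · exact h.trans (hi₀ i hh)⟩
              · exact ⟨i₀, Finset.mem_insert_of_mem hi₀s, fun i hi => by
                  rcases Finset.mem_insert.1 hi with rfl | hh
                  · exact h
                  · exact hi₀ i hh⟩
        obtain ⟨i₀, hi₀u, hi₀⟩ := this
        obtain ⟨z, hzK, hzC⟩ := (hcS i₀.2).2.2 K hKF
        exact ⟨z, hzK, mem_iInter₂.2 fun i hi => hi₀ i hi hzC⟩
  obtain ⟨C, -, hCmin⟩ := zorn_superset_nonempty S hzorn Uᶜ hUc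
  obtain ⟨hCcl, hCU, hCK⟩ := hCmin.prop
  have hCne : C.Nonempty := by
    obtain ⟨K, hK⟩ := hne
    obtain ⟨z, _, hz⟩ := hCK K hK
    exact ⟨z, hz⟩
  -- C is irreducible
  have hirr : IsIrreducible C := by
    refine ⟨hCne, fun u v hu hv hCu hCv => ?_⟩
    by_contra hemp
    rw [not_nonempty_iff_eq_empty] at hemp
    have hC12 : C = (C ∩ uᶜ) ∪ (C ∩ vᶜ) := by
      apply Subset.antisymm
      · intro z hz
        by_cases hzu : z ∈ u
        · refine Or.inr ⟨hz, fun hzv => ?_⟩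
          have hmm : z ∈ C ∩ (u ∩ v) := ⟨hz, hzu, hzv⟩
          rw [hemp] at hmm
          exact hmm
        · exact Or.inl ⟨hz, hzu⟩
      · rintro z (⟨h, _⟩ | ⟨h, _⟩) <;> exact h
    have hnot : ∀ w : Set Z, IsOpen w → (C ∩ w).Nonempty →
        ∃ K ∈ F, (K ∩ (C ∩ wᶜ)) = ∅ := by
      intro w hw hCw
      by_contra hc
      push_neg at hc
      have hmem : C ∩ wᶜ ∈ S :=
        ⟨hCcl.inter hw.isClosed_compl, inter_subset_left.trans hCU,
          fun K hK => hc K hK⟩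
      have := hCmin.eq_of_subset hmem inter_subset_left
      obtain ⟨z, hzC, hzw⟩ := hCw
      rw [← this] at hzC
      exact hzC.2 hzw
    obtain ⟨K₁, hK₁F, hK₁⟩ := hnot u hu hCu
    obtain ⟨K₂, hK₂F, hK₂⟩ := hnot v hv hCv
    obtain ⟨K, hKF, hKu, hKv⟩ := hdir K₁ hK₁F K₂ hK₂F
    obtain ⟨z, hzK, hzC⟩ := hCK K hKF
    rw [hC12] at hzC
    rcases hzC with h | h
    · have : z ∈ K₁ ∩ (C ∩ uᶜ) := ⟨hKu hzK, h⟩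
      rw [hK₁] at this; exact this
    · have : z ∈ K₂ ∩ (C ∩ vᶜ) := ⟨hKv hzK, h⟩
      rw [hK₂] at this; exact this
  obtain ⟨y, hy⟩ := QuasiSober.sober hirr hCcl
  -- y belongs to every K ∈ F
  have hyK : ∀ K ∈ F, y ∈ K := by
    intro K hK
    obtain ⟨z, hzK, hzC⟩ := hCK K hK
    refine sat_mem (hcs K hK).2 (fun W hW hKW => ?_)
    have hzcl : z ∈ closure ({y} : Set Z) := by rw [hy]; exact hzC
    rcases mem_closure_iff.1 hzcl W hW (hKW hzK) with ⟨w, hwW, hwy⟩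
    rwa [mem_singleton_iff.1 hwy] at hwW
  have hyU : y ∈ U := hsub (fun K hK => hyK K hK)
  have hyC : y ∈ C := by rw [← hy]; exact subset_closure rfl
  exact hCU hyC hyU

/-- Hofmann–Mislove, part 2: a Scott-open filter of opens in a quasi-sober space
contains every open containing its intersection. -/
lemma HM2 [QuasiSober Z] (F : Set (Opens Z))
    (htop : ⊤ ∈ F)
    (hup : ∀ U V : Opens Z, U ∈ F → U ≤ V → V ∈ F)
    (hinf : ∀ U V : Opens Z, U ∈ F → V ∈ F → U ⊓ V ∈ F)
    (hscott : ∀ S : Set (Opens Z), S.Nonempty → DirectedOn (· ≤ ·) S →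
        sSup S ∈ F → ∃ U ∈ S, U ∈ F)
    (V : Opens Z) (hsub : (⋂ U ∈ F, (U : Set Z)) ⊆ (V : Set Z)) : V ∈ F := by
  by_contra hVF
  set S : Set (Set Z) := {C | IsClosed C ∧ C ⊆ (↑V : Set Z)ᶜ ∧
      ∀ W : Opens Z, (W : Set Z) = Cᶜ → W ∉ F} with hS
  have hVc : (↑V : Set Z)ᶜ ∈ S := by
    refine ⟨V.isOpen.isClosed_compl, Subset.rfl, fun W hW hWF => hVF ?_⟩
    have : W = V := Opens.ext (by rw [hW, compl_compl])
    rwa [this] at hWF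
  have hzorn : ∀ c ⊆ S, IsChain (· ⊆ ·) c → c.Nonempty → ∃ lb ∈ S, ∀ s ∈ c, lb ⊆ s := by
    intro c hcS hchain hcne
    refine ⟨⋂₀ c, ⟨isClosed_sInter fun C hC => (hcS hC).1, ?_, ?_⟩,
      fun s hs => sInter_subset_of_mem hs⟩
    · obtain ⟨C, hC⟩ := hcne
      exact (sInter_subset_of_mem hC).trans (hcS hC).2.1
    · intro W hW hWF
      -- (⋂₀ c)ᶜ is a directed union of open complements of chain members
      set T : Set (Opens Z) := {W' : Opens Z | ∃ C ∈ c, (W' : Set Z) = Cᶜ} with hT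
      have hTne : T.Nonempty := by
        obtain ⟨C, hC⟩ := hcne
        exact ⟨⟨Cᶜ, (hcS hC).1.isOpen_compl⟩, C, hC, rfl⟩
      have hTdir : DirectedOn (· ≤ ·) T := by
        rintro W₁ ⟨C₁, hC₁, hW₁⟩ W₂ ⟨C₂, hC₂, hW₂⟩
        rcases hchain.total hC₁ hC₂ with h | h
        · refine ⟨W₁, ⟨C₁, hC₁, hW₁⟩, le_refl _, ?_⟩
          intro z hz
          rw [← SetLike.mem_coe, hW₁]
          rw [← SetLike.mem_coe, hW₂] at hz
          exact fun hzC => hz (h hzC)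
        · refine ⟨W₂, ⟨C₂, hC₂, hW₂⟩, ?_, le_refl _⟩
          intro z hz
          rw [← SetLike.mem_coe, hW₂]
          rw [← SetLike.mem_coe, hW₁] at hz
          exact fun hzC => hz (h hzC)
      have hsupT : sSup T = W := by
        apply Opens.ext
        rw [Opens.coe_sSup, hW]
        apply Subset.antisymm
        · intro z hz
          simp only [mem_iUnion] at hz
          obtain ⟨W', ⟨C, hC, hWC⟩, hzW⟩ := hz
          rw [SetLike.mem_coe, ← SetLike.mem_coe, hWC] at hzW
          exact fun hzc => hzW (hzc C hC)
        · intro z hz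
          rw [mem_compl_iff, mem_sInter] at hz
          push_neg at hz
          obtain ⟨C, hC, hzC⟩ := hz
          simp only [mem_iUnion]
          exact ⟨⟨Cᶜ, (hcS hC).1.isOpen_compl⟩, ⟨C, hC, rfl⟩, hzC⟩
      obtain ⟨W', ⟨C, hC, hWC⟩, hW'F⟩ := hscott T hTne hTdir (by rwa [hsupT])
      exact (hcS hC).2.2 W' hWC hW'F
  obtain ⟨C, -, hCmin⟩ := zorn_superset_nonempty S hzorn _ hVc
  obtain ⟨hCcl, hCV, hCF⟩ := hCmin.prop
  have hCne : C.Nonempty := by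
    rw [nonempty_iff_ne_empty]
    rintro rfl
    exact hCF ⊤ (by simp) htop
  have hirr : IsIrreducible C := by
    refine ⟨hCne, fun u v hu hv hCu hCv => ?_⟩
    by_contra hemp
    rw [not_nonempty_iff_eq_empty] at hemp
    have hC12 : C = (C ∩ uᶜ) ∪ (C ∩ vᶜ) := by
      apply Subset.antisymm
      · intro z hz
        by_cases hzu : z ∈ u
        · refine Or.inr ⟨hz, fun hzv => ?_⟩
          have hmm : z ∈ C ∩ (u ∩ v) := ⟨hz, hzu, hzv⟩
          rw [hemp] at hmm
          exact hmm
        · exact Or.inl ⟨hz, hzu⟩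
      · rintro z (⟨h, _⟩ | ⟨h, _⟩) <;> exact h
    have hnot : ∀ w : Set Z, IsOpen w → (C ∩ w).Nonempty →
        ∃ W : Opens Z, (W : Set Z) = (C ∩ wᶜ)ᶜ ∧ W ∈ F := by
      intro w hw hCw
      by_contra hc
      push_neg at hc
      have hmem : C ∩ wᶜ ∈ S :=
        ⟨hCcl.inter hw.isClosed_compl, inter_subset_left.trans hCV,
          fun W hW hWF => hc W hW hWF⟩
      have heq := hCmin.eq_of_subset hmem inter_subset_left
      obtain ⟨z, hzC, hzw⟩ := hCw
      rw [← heq] at hzC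
      exact hzC.2 hzw
    obtain ⟨W₁, hW₁c, hW₁F⟩ := hnot u hu hCu
    obtain ⟨W₂, hW₂c, hW₂F⟩ := hnot v hv hCv
    refine hCF (W₁ ⊓ W₂) ?_ (hinf _ _ hW₁F hW₂F)
    rw [Opens.coe_inf, hW₁c, hW₂c, ← compl_union, ← hC12]
  obtain ⟨y, hy⟩ := QuasiSober.sober hirr hCcl
  have hyC : y ∈ C := by rw [← hy]; exact subset_closure rfl
  have hyK : ∀ W ∈ F, y ∈ W := by
    intro W hWF
    by_contra hyW
    have hCW : C ⊆ (↑W : Set Z)ᶜ := by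
      rw [← hy]
      exact closure_minimal (by simpa using hyW) W.isOpen.isClosed_compl
    have hle : W ≤ ⟨Cᶜ, hCcl.isOpen_compl⟩ := by
      intro z hz
      exact fun hzC => hCW hzC hz
    exact hCF ⟨Cᶜ, hCcl.isOpen_compl⟩ rfl (hup _ _ hWF hle)
  have hyV : y ∈ (V : Set Z) := hsub (by
    simp only [mem_iInter]
    exact fun W hW => hyK W hW)
  exact hCV hyC hyV

lemma HM2_saturated (F : Set (Opens Z)) :
    IsSaturatedSet (⋂ U ∈ F, (U : Set Z)) := by
  apply Subset.antisymm
  · intro z hz W hW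
    exact hW.2 hz
  · intro z hz
    simp only [mem_iInter]
    intro W hWF
    rw [mem_sInter] at hz
    exact hz (↑W) ⟨W.isOpen, fun w hw => by
      simp only [mem_iInter] at hw
      exact hw W hWF⟩

lemma HM2_compact [QuasiSober Z] (F : Set (Opens Z))
    (htop : ⊤ ∈ F)
    (hup : ∀ U V : Opens Z, U ∈ F → U ≤ V → V ∈ F)
    (hinf : ∀ U V : Opens Z, U ∈ F → V ∈ F → U ⊓ V ∈ F)
    (hscott : ∀ S : Set (Opens Z), S.Nonempty → DirectedOn (· ≤ ·) S →
        sSup S ∈ F → ∃ U ∈ S, U ∈ F) :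
    IsCompact (⋂ U ∈ F, (U : Set Z)) := by
  set K := ⋂ U ∈ F, (U : Set Z) with hK
  refine isCompact_of_finite_subcover fun {ι} U hUo hcov => ?_
  classical
  set T : Set (Opens Z) := Set.range (fun t : Finset ι => ⨆ i ∈ t, (⟨U i, hUo i⟩ : Opens Z))
    with hT
  have hTsup : ∀ t : Finset ι, ((⨆ i ∈ t, (⟨U i, hUo i⟩ : Opens Z) : Opens Z) : Set Z)
      = ⋃ i ∈ t, U i := by
    intro t
    simp [Opens.coe_iSup]
  have hTne : T.Nonempty := ⟨_, ∅, rfl⟩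
  have hTdir : DirectedOn (· ≤ ·) T := by
    rintro W₁ ⟨t₁, rfl⟩ W₂ ⟨t₂, rfl⟩
    refine ⟨_, ⟨t₁ ∪ t₂, rfl⟩, ?_, ?_⟩
    · apply iSup_le_iSup_of_subset
      intro i hi
      exact Finset.mem_union_left _ hi
    · apply iSup_le_iSup_of_subset
      intro i hi
      exact Finset.mem_union_right _ hi
  have hsupT : ((sSup T : Opens Z) : Set Z) = ⋃ i, U i := by
    rw [Opens.coe_sSup]
    apply Subset.antisymm
    · intro z hz
      simp only [mem_iUnion] at hz ⊢
      obtain ⟨W, ⟨t, rfl⟩, hzW⟩ := hz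
      rw [SetLike.mem_coe] at hzW
      have := hTsup t
      rw [← SetLike.mem_coe, this] at hzW
      simp only [mem_iUnion] at hzW
      obtain ⟨i, _, hi⟩ := hzW
      exact ⟨i, hi⟩
    · intro z hz
      simp only [mem_iUnion] at hz ⊢
      obtain ⟨i, hi⟩ := hz
      refine ⟨_, ⟨{i}, rfl⟩, ?_⟩
      rw [SetLike.mem_coe, ← SetLike.mem_coe, hTsup]
      simp [hi]
  have hmemF : sSup T ∈ F := by
    apply HM2 F htop hup hinf hscott
    rw [hsupT]
    exact hcov
  obtain ⟨W, ⟨t, rfl⟩, hWF⟩ := hscott T hTne hTdir hmemF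
  refine ⟨t, ?_⟩
  have : K ⊆ ⋃ i ∈ t, U i := by
    rw [← hTsup]
    exact biInter_subset_of_mem hWF
  exact this

end HM

section Main
set_option linter.unusedSectionVars false

variable {X Y : Type*} [PartialOrder X] [PartialOrder Y]
    [TopologicalSpace X] [TopologicalSpace Y]
    [Topology.IsScott X Set.univ] [Topology.IsScott Y Set.univ] [QuasiSober Y]

lemma fwd_isOpen (t : X → Set Y)
    (hcs : ∀ x, IsCompact (t x) ∧ IsSaturatedSet (t x))
    (hanti : ∀ x x', x ≤ x' → t x' ⊆ t x)
    (hsup : ∀ D : Set X, D.Nonempty → DirectedOn (· ≤ ·) D → ∀ a, IsLUB D a →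
      t a = ⋂ x ∈ D, t x)
    (V : Set Y) (hV : IsOpen V) : IsOpen {x | t x ⊆ V} := by
  rw [Topology.IsScott.isOpen_iff_isUpperSet_and_dirSupInaccOn (D := Set.univ)]
  constructor
  · intro a b hab ha
    exact (hanti a b hab).trans ha
  · intro d _ hdne hddir a hlub ha
    have h1 : t a = ⋂ x ∈ d, t x := hsup d hdne hddir a hlub
    have hHM := HM1 (t '' d) (hdne.image t) ?_ ?_ V hV ?_
    · obtain ⟨K, ⟨x, hxd, rfl⟩, hKV⟩ := hHM
      exact ⟨x, hxd, hKV⟩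
    · rintro _ ⟨x, hx, rfl⟩ _ ⟨x', hx', rfl⟩
      obtain ⟨z, hz, h1', h2'⟩ := hddir x hx x' hx'
      exact ⟨t z, ⟨z, hz, rfl⟩, hanti _ _ h1', hanti _ _ h2'⟩
    · rintro _ ⟨x, hx, rfl⟩
      exact hcs x
    · rw [sInter_image, ← h1]
      exact ha

lemma fwd_sup (t : X → Set Y)
    (hcs : ∀ x, IsCompact (t x) ∧ IsSaturatedSet (t x))
    (S : Set (Opens Y)) (hSne : S.Nonempty) (hSdir : DirectedOn (· ≤ ·) S) :
    {x : X | t x ⊆ ((sSup S : Opens Y) : Set Y)} = ⋃ U ∈ S, {x : X | t x ⊆ (U : Set Y)} := by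
  apply Subset.antisymm
  · intro x hx
    have hcov : t x ⊆ ⋃ U : S, ((U : Opens Y) : Set Y) := by
      intro z hz
      have := hx hz
      rw [Opens.coe_sSup] at this
      simp only [mem_iUnion] at this ⊢
      obtain ⟨U, hU, hzU⟩ := this
      exact ⟨⟨U, hU⟩, hzU⟩
    have : Nonempty S := hSne.to_subtype
    have hdirv : Directed (· ⊆ ·) (fun U : S => ((U : Opens Y) : Set Y)) := by
      intro i j
      obtain ⟨z, hz, h1, h2⟩ := hSdir i i.2 j j.2
      exact ⟨⟨z, hz⟩, h1, h2⟩
    obtain ⟨U, hU⟩ := (hcs x).1.elim_directed_cover _ (fun U : S => (U : Opens Y).isOpen)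
      hcov hdirv
    simp only [mem_iUnion]
    exact ⟨U, U.2, hU⟩
  · intro x hx
    simp only [mem_iUnion] at hx
    obtain ⟨U, hUS, hxU⟩ := hx
    intro z hz
    rw [Opens.coe_sSup]
    simp only [mem_iUnion]
    exact ⟨U, hUS, hxU hz⟩

variable (s : Opens Y → Opens X)

/-- The compact saturated set associated to `s` at `x`. -/
def bwdK (x : X) : Set Y := ⋂ V ∈ {V : Opens Y | x ∈ s V}, (V : Set Y)

variable (htop : s ⊤ = ⊤) (hinf : ∀ U V : Opens Y, s (U ⊓ V) = s U ⊓ s V)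
    (hsupS : ∀ S : Set (Opens Y), S.Nonempty → DirectedOn (· ≤ ·) S →
      s (sSup S) = ⨆ U ∈ S, s U)

include hinf in
lemma s_mono {U V : Opens Y} (h : U ≤ V) : s U ≤ s V := by
  have h2 := hinf U V
  rw [inf_eq_left.2 h] at h2
  rw [h2]
  exact inf_le_right

include htop hinf hsupS in
lemma bwd_filter (x : X) :
    (⊤ ∈ {V : Opens Y | x ∈ s V}) ∧
    (∀ U V : Opens Y, U ∈ {V : Opens Y | x ∈ s V} → U ≤ V → V ∈ {V : Opens Y | x ∈ s V}) ∧
    (∀ U V : Opens Y, U ∈ {V : Opens Y | x ∈ s V} → V ∈ {V : Opens Y | x ∈ s V} →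
      U ⊓ V ∈ {V : Opens Y | x ∈ s V}) ∧
    (∀ S : Set (Opens Y), S.Nonempty → DirectedOn (· ≤ ·) S →
      sSup S ∈ {V : Opens Y | x ∈ s V} → ∃ U ∈ S, U ∈ {V : Opens Y | x ∈ s V}) := by
  refine ⟨?_, ?_, ?_, ?_⟩
  · show x ∈ s ⊤
    rw [htop]
    trivial
  · intro U V hU hUV
    exact s_mono s hinf hUV hU
  · intro U V hU hV
    show x ∈ s (U ⊓ V)
    rw [hinf]
    exact ⟨hU, hV⟩
  · intro S hSne hSdir hx
    have hx2 : x ∈ s (sSup S) := hx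
    rw [hsupS S hSne hSdir] at hx2
    have := Opens.mem_iSup.1 hx2
    obtain ⟨U, hU⟩ := this
    obtain ⟨hUS, hxU⟩ := Opens.mem_iSup.1 hU
    exact ⟨U, hUS, hxU⟩

include htop hinf hsupS in
lemma bwd_key (x : X) (V : Opens Y) : bwdK s x ⊆ (V : Set Y) ↔ x ∈ s V := by
  obtain ⟨h1, h2, h3, h4⟩ := bwd_filter s htop hinf hsupS x
  constructor
  · intro hsub
    exact HM2 _ h1 h2 h3 h4 V hsub
  · intro hx
    exact biInter_subset_of_mem hx

include htop hinf hsupS in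
lemma bwd_cs (x : X) : IsCompact (bwdK s x) ∧ IsSaturatedSet (bwdK s x) := by
  obtain ⟨h1, h2, h3, h4⟩ := bwd_filter s htop hinf hsupS x
  exact ⟨HM2_compact _ h1 h2 h3 h4, HM2_saturated _⟩

lemma bwd_anti {x x' : X} (h : x ≤ x') : bwdK s x' ⊆ bwdK s x := by
  apply biInter_subset_biInter_left
  intro V hV
  exact Topology.IsScott.isUpperSet_of_isOpen (D := (Set.univ : Set (Set X))) (s V).isOpen h hV

include htop hinf hsupS in
lemma bwd_sup (D : Set X) (hDne : D.Nonempty) (hDdir : DirectedOn (· ≤ ·) D)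
    (a : X) (hlub : IsLUB D a) : bwdK s a = ⋂ x ∈ D, bwdK s x := by
  apply Subset.antisymm
  · exact subset_iInter₂ fun x hx => bwd_anti s (hlub.1 hx)
  · intro z hz
    simp only [bwdK, mem_iInter, mem_setOf_eq] at hz ⊢
    intro V hV
    have hopen := (s V).isOpen
    rw [Topology.IsScott.isOpen_iff_isUpperSet_and_dirSupInaccOn (α := X) (D := (Set.univ : Set (Set X)))] at hopen
    obtain ⟨x, hxD, hxV⟩ := hopen.2 (mem_univ D) hDne hDdir hlub hV
    exact hz x hxD V hxV

end Main

/-- For dcpos `X`, `Y` with their Scott topologies and `Y` sober, there is a bijection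
between (i) maps `t : X → S(Y)` into the compact saturated subsets of `Y` that are
Scott-continuous for reverse inclusion (antitone, and turning directed suprema into
intersections) and (ii) maps `s : Opens Y → Opens X` preserving the top element, binary
intersections, and directed unions; the correspondence is `s(V) = {x | t(x) ⊆ V}`. -/
theorem smyth_state_predicate_bijection {X Y : Type*} [PartialOrder X] [PartialOrder Y]
    [TopologicalSpace X] [TopologicalSpace Y]
    [Topology.IsScott X Set.univ] [Topology.IsScott Y Set.univ]
    (hX : IsDcpo X) (hY : IsDcpo Y) [T0Space Y] [QuasiSober Y] :
    ∃ e : {t : X → Set Y //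
            (∀ x, IsCompact (t x) ∧ IsSaturatedSet (t x)) ∧
            (∀ x x', x ≤ x' → t x' ⊆ t x) ∧
            (∀ D : Set X, D.Nonempty → DirectedOn (· ≤ ·) D → ∀ a, IsLUB D a →
              t a = ⋂ x ∈ D, t x)} ≃
          {s : Opens Y → Opens X //
            s ⊤ = ⊤ ∧
            (∀ U V : Opens Y, s (U ⊓ V) = s U ⊓ s V) ∧
            (∀ S : Set (Opens Y), S.Nonempty → DirectedOn (· ≤ ·) S →
              s (sSup S) = ⨆ U ∈ S, s U)},
      ∀ t (V : Opens Y) (x : X), x ∈ ((e t).1 V : Set X) ↔ t.1 x ⊆ (V : Set Y) := by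
  classical
  refine ⟨{
    toFun := fun tp =>
      ⟨fun V => ⟨{x | tp.1 x ⊆ (V : Set Y)},
          fwd_isOpen tp.1 tp.2.1 tp.2.2.1 tp.2.2.2 V V.isOpen⟩, ?_, ?_, ?_⟩
    invFun := fun sp =>
      ⟨bwdK sp.1,
        fun x => bwd_cs sp.1 sp.2.1 sp.2.2.1 sp.2.2.2 x,
        fun x x' h => bwd_anti sp.1 h,
        fun D hne hdir a hlub => bwd_sup sp.1 sp.2.1 sp.2.2.1 sp.2.2.2 D hne hdir a hlub⟩
    left_inv := ?_
    right_inv := ?_ }, fun tp V x => Iff.rfl⟩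
  · -- top
    apply Opens.ext
    ext x
    simp
  · -- inf
    intro U V
    apply Opens.ext
    ext x
    simp only [Opens.coe_inf, Opens.coe_mk, mem_setOf_eq, mem_inter_iff, subset_inter_iff]
  · -- directed sup
    intro S hSne hSdir
    apply Opens.ext
    simp only [Opens.coe_iSup, Opens.coe_mk]
    exact fwd_sup tp.1 tp.2.1 S hSne hSdir
  · -- left inverse
    intro tp
    apply Subtype.ext
    funext x
    apply Subset.antisymm
    · intro z hz
      rw [(tp.2.1 x).2, mem_sInter]
      rintro U ⟨hUo, hUsub⟩
      simp only [bwdK, mem_iInter] at hz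
      exact hz ⟨U, hUo⟩ hUsub
    · intro z hz
      simp only [bwdK, mem_iInter, mem_setOf_eq]
      intro V hV
      exact hV hz
  · -- right inverse
    intro sp
    apply Subtype.ext
    funext V
    apply Opens.ext
    ext x
    simp only [Opens.coe_mk, mem_setOf_eq, SetLike.mem_coe]
    exact bwd_key sp.1 sp.2.1 sp.2.2.1 sp.2.2.2 x V
end

section
/- Let X and Y be dcpos and let t : X → ([Y →c ℝ≥0∞] → ℝ≥0∞) be such that each t(x) is Scott-continuous and linear, and x ↦ t(x)(g) is Scott-continuous for every g ∈ [Y →c ℝ≥0∞]. Then for every Scott-continuous linear functional φ : [X →c ℝ≥0∞] → ℝ≥0∞, the Kleisli lifting t†(φ) : [Y →c ℝ≥0∞] → ℝ≥0∞ defined by t†(φ)(g) = φ(x ↦ t(x)(g)) is again Scott-continuous and linear. -/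
open Set ENNReal

/-- The dcpo `[X →c ℝ≥0∞]` of Scott-continuous maps into the extended nonnegative reals,
with the pointwise order. -/
abbrev ContFun (X : Type*) [Preorder X] : Type _ := {f : X → ℝ≥0∞ // ScottContinuous f}

namespace ContFun

variable {X : Type*} [Preorder X]

lemma scottContinuous_add {f g : X → ℝ≥0∞} (hf : ScottContinuous f) (hg : ScottContinuous g) :
    ScottContinuous fun x => f x + g x := by
  intro d hd hdir a ha
  haveI : Nonempty d := hd.to_subtype
  have hfa : f a = ⨆ x : d, f x := by rw [← (hf hd hdir ha).sSup_eq, sSup_image']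
  have hga : g a = ⨆ x : d, g x := by rw [← (hg hd hdir ha).sSup_eq, sSup_image']
  have key : f a + g a = sSup ((fun x => f x + g x) '' d) := by
    rw [hfa, hga, sSup_image', ENNReal.iSup_add_iSup]
    intro i j
    obtain ⟨k, hk, hik, hjk⟩ := hdir i.1 i.2 j.1 j.2
    exact ⟨⟨k, hk⟩, add_le_add (hf.monotone hik) (hg.monotone hjk)⟩
  simpa [key] using isLUB_sSup ((fun x => f x + g x) '' d)

lemma scottContinuous_smul (r : ℝ≥0∞) {f : X → ℝ≥0∞} (hf : ScottContinuous f) :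
    ScottContinuous fun x => r * f x := by
  intro d hd hdir a ha
  have hfa : f a = ⨆ x : d, f x := by rw [← (hf hd hdir ha).sSup_eq, sSup_image']
  have key : r * f a = sSup ((fun x => r * f x) '' d) := by
    rw [hfa, sSup_image', ENNReal.mul_iSup]
  simpa [key] using isLUB_sSup ((fun x => r * f x) '' d)

/-- Pointwise addition on `[X →c ℝ≥0∞]`. -/
noncomputable instance : Add (ContFun X) :=
  ⟨fun f g => ⟨fun x => f.1 x + g.1 x, scottContinuous_add f.2 g.2⟩⟩

/-- Pointwise scalar multiplication on `[X →c ℝ≥0∞]`. -/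
noncomputable instance : SMul ℝ≥0∞ (ContFun X) :=
  ⟨fun r f => ⟨fun x => r * f.1 x, scottContinuous_smul r f.2⟩⟩

@[simp] lemma add_apply (f g : ContFun X) (x : X) : (f + g).1 x = f.1 x + g.1 x := rfl

@[simp] lemma smul_apply (r : ℝ≥0∞) (f : ContFun X) (x : X) : (r • f).1 x = r * f.1 x := rfl

end ContFun

/-- A functional `φ : [X →c ℝ≥0∞] → ℝ≥0∞` is linear if it is additive and homogeneous. -/
def IsLinearFunctional {X : Type*} [Preorder X] (φ : ContFun X → ℝ≥0∞) : Prop :=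
  (∀ f g : ContFun X, φ (f + g) = φ f + φ g) ∧
  (∀ (r : ℝ≥0∞) (f : ContFun X), φ (r • f) = r * φ f)

/-- The Kleisli lifting of a state transformer `t` with values in the extended probabilistic
powerdomain maps Scott-continuous linear functionals to Scott-continuous linear
functionals: `t†(φ)(g) = φ(x ↦ t(x)(g))`. -/
theorem kleisli_lifting_preserves_linear {X Y : Type*} [PartialOrder X] [PartialOrder Y]
    (hX : IsDcpo X) (hY : IsDcpo Y)
    (t : X → ContFun Y → ℝ≥0∞)
    (ht : ∀ x, ScottContinuous (t x) ∧ IsLinearFunctional (t x))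
    (ht' : ∀ g : ContFun Y, ScottContinuous fun x => t x g)
    (φ : ContFun X → ℝ≥0∞) (hφ : ScottContinuous φ) (hφl : IsLinearFunctional φ) :
    ScottContinuous (fun g : ContFun Y => φ ⟨fun x => t x g, ht' g⟩) ∧
    IsLinearFunctional (fun g : ContFun Y => φ ⟨fun x => t x g, ht' g⟩) := by
  have hGmono : Monotone (fun g : ContFun Y => (⟨fun x => t x g, ht' g⟩ : ContFun X)) :=
    fun g₁ g₂ h x => ((ht x).1).monotone h
  constructor
  · intro d hd hdir a ha
    have hdir' : DirectedOn (· ≤ ·)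
        ((fun g : ContFun Y => (⟨fun x => t x g, ht' g⟩ : ContFun X)) '' d) := by
      rintro _ ⟨g₁, h₁, rfl⟩ _ ⟨g₂, h₂, rfl⟩
      obtain ⟨k, hk, h1k, h2k⟩ := hdir g₁ h₁ g₂ h₂
      exact ⟨_, ⟨k, hk, rfl⟩, hGmono h1k, hGmono h2k⟩
    have hlub : IsLUB ((fun g : ContFun Y => (⟨fun x => t x g, ht' g⟩ : ContFun X)) '' d)
        ⟨fun x => t x a, ht' a⟩ := by
      constructor
      · rintro _ ⟨g, hg, rfl⟩
        exact hGmono (ha.1 hg)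
      · intro u hu x
        refine ((ht x).1 hd hdir ha).2 ?_
        rintro _ ⟨g, hg, rfl⟩
        exact hu ⟨g, hg, rfl⟩ x
    have := hφ (hd.image _) hdir' hlub
    simpa [Set.image_image] using this
  · constructor
    · intro f g
      have h : (⟨fun x => t x (f + g), ht' _⟩ : ContFun X)
          = ⟨fun x => t x f, ht' f⟩ + ⟨fun x => t x g, ht' g⟩ :=
        Subtype.ext (funext fun x => (ht x).2.1 f g)
      simp only [h, hφl.1]
    · intro r f
      have h : (⟨fun x => t x (r • f), ht' _⟩ : ContFun X)
          = r • (⟨fun x => t x f, ht' f⟩ : ContFun X) :=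
        Subtype.ext (funext fun x => (ht x).2.2 r f)
      simp only [h, hφl.2]
end

section
/- Let X and Y be dcpos and let V(Y) denote the dcpo of Scott-continuous linear functionals on [Y →c ℝ≥0∞] with the pointwise order (the extended probabilistic powerdomain over Y). There is a bijection between (i) Scott-continuous maps t : X → V(Y) and (ii) Scott-continuous linear maps s : [Y →c ℝ≥0∞] → [X →c ℝ≥0∞] (i.e., s(g + h) = s(g) + s(h) and s(r•g) = r•s(g) for all g, h and r ∈ ℝ≥0∞), the correspondence being given by s(g)(x) = t(x)(g). -/
open Set ENNReal

/-- The extended probabilistic powerdomain `V(Y)`: Scott-continuous linear functionals on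
`[Y →c ℝ≥0∞]`, with the pointwise order. -/
abbrev ProbPowerdomain (Y : Type*) [Preorder Y] : Type _ :=
  {φ : ContFun Y → ℝ≥0∞ // ScottContinuous φ ∧ IsLinearFunctional φ}

namespace PSPB

open Set ENNReal

variable {A : Type*} [Preorder A]

lemma scottContinuous_iSup {ι : Sort*} {f : ι → A → ℝ≥0∞} (hf : ∀ i, ScottContinuous (f i)) :
    ScottContinuous fun a => ⨆ i, f i a := by
  intro d hd hdir a ha
  have h1 : ∀ i, f i a = ⨆ x : d, f i x := fun i => by
    rw [← ((hf i) hd hdir ha).sSup_eq, sSup_image']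
  have key : (⨆ i, f i a) = sSup ((fun x => ⨆ i, f i x) '' d) := by
    rw [sSup_image']
    simp_rw [h1]
    exact iSup_comm
  simpa [key] using isLUB_sSup ((fun x => ⨆ i, f i x) '' d)

omit [Preorder A] in
lemma isLUB_subtype {P : (A → ℝ≥0∞) → Prop} (S : Set {f : A → ℝ≥0∞ // P f})
    (hp : P (fun a => ⨆ f : S, (f : {f : A → ℝ≥0∞ // P f}).1 a)) :
    IsLUB S ⟨fun a => ⨆ f : S, (f : {f : A → ℝ≥0∞ // P f}).1 a, hp⟩ := by
  constructor
  · intro f hf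
    show f.1 ≤ _
    intro a
    exact le_iSup (fun g : S => (g : {f : A → ℝ≥0∞ // P f}).1 a) ⟨f, hf⟩
  · intro u hu
    show (fun a => ⨆ f : S, (f : {f : A → ℝ≥0∞ // P f}).1 a) ≤ u.1
    intro a
    exact iSup_le fun g => (Subtype.coe_le_coe.mpr (hu g.2) : g.1.1 ≤ u.1) a

omit [Preorder A] in
lemma eval_of_isLUB {P : (A → ℝ≥0∞) → Prop} {S : Set {f : A → ℝ≥0∞ // P f}}
    {b : {f : A → ℝ≥0∞ // P f}} (hb : IsLUB S b)
    (hp : P (fun a => ⨆ f : S, (f : {f : A → ℝ≥0∞ // P f}).1 a)) (a : A) :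
    b.1 a = ⨆ f : S, (f : {f : A → ℝ≥0∞ // P f}).1 a := by
  rw [hb.unique (isLUB_subtype S hp)]

/-- The pointwise sup of a directed set of Scott-continuous linear functionals is
Scott-continuous and linear. -/
lemma sup_mem_prob {Y : Type*} [Preorder Y] (S : Set (ProbPowerdomain Y))
    (hS : DirectedOn (· ≤ ·) S) :
    ScottContinuous (fun g => ⨆ φ : S, (φ : ProbPowerdomain Y).1 g) ∧
    IsLinearFunctional (fun g => ⨆ φ : S, (φ : ProbPowerdomain Y).1 g) := by
  refine ⟨scottContinuous_iSup (fun φ : S => φ.1.2.1), ?_, ?_⟩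
  · intro f g
    have h1 : ∀ φ : S, φ.1.1 (f + g) = φ.1.1 f + φ.1.1 g := fun φ => φ.1.2.2.1 f g
    simp_rw [h1]
    refine (ENNReal.iSup_add_iSup ?_).symm
    intro i j
    obtain ⟨k, hk, hik, hjk⟩ := hS i.1 i.2 j.1 j.2
    have hik' : i.1.1 ≤ k.1 := Subtype.coe_le_coe.mpr hik
    have hjk' : j.1.1 ≤ k.1 := Subtype.coe_le_coe.mpr hjk
    exact ⟨⟨k, hk⟩, add_le_add (hik' f) (hjk' g)⟩
  · intro r f
    have h1 : ∀ φ : S, φ.1.1 (r • f) = r * φ.1.1 f := fun φ => φ.1.2.2.2 r f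
    simp_rw [h1]
    exact (ENNReal.mul_iSup _ _).symm


section Main
variable {X Y : Type*} [PartialOrder X] [PartialOrder Y]

lemma fwd_eval_cont {t : X → ProbPowerdomain Y} (ht : ScottContinuous t) (g : ContFun Y) :
    ScottContinuous fun x => (t x).1 g := by
  intro d hd hdir a ha
  have hS : DirectedOn (· ≤ ·) (t '' d) := by
    rintro _ ⟨x, hx, rfl⟩ _ ⟨y, hy, rfl⟩
    obtain ⟨z, hz, h1, h2⟩ := hdir x hx y hy
    exact ⟨t z, mem_image_of_mem _ hz, ht.monotone h1, ht.monotone h2⟩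
  have hp := sup_mem_prob (t '' d) hS
  have heval := eval_of_isLUB (ht hd hdir ha) hp g
  have key : (t a).1 g = sSup ((fun x => (t x).1 g) '' d) := by
    rw [heval, (sSup_image' (s := t '' d) (f := fun φ : ProbPowerdomain Y => φ.1 g)).symm,
      Set.image_image]
  simpa [key] using isLUB_sSup ((fun x => (t x).1 g) '' d)

lemma fwd_s_cont {t : X → ProbPowerdomain Y} (ht : ScottContinuous t) :
    ScottContinuous (fun g : ContFun Y =>
      (⟨fun x => (t x).1 g, fwd_eval_cont ht g⟩ : ContFun X)) := by
  intro D hD hDdir G hG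
  set s : ContFun Y → ContFun X := fun g => ⟨fun x => (t x).1 g, fwd_eval_cont ht g⟩ with hs
  have hp : ScottContinuous (fun x => ⨆ f : (s '' D), (f : ContFun X).1 x) :=
    scottContinuous_iSup (fun f : (s '' D) => f.1.2)
  have hlub := isLUB_subtype (s '' D) hp
  have heq : s G = ⟨fun x => ⨆ f : (s '' D), (f : ContFun X).1 x, hp⟩ := by
    apply Subtype.ext
    funext x
    show (t x).1 G = ⨆ f : (s '' D), (f : ContFun X).1 x
    have h1 : (t x).1 G = sSup ((t x).1 '' D) := ((t x).2.1 hD hDdir hG).sSup_eq.symm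
    rw [(sSup_image' (s := s '' D) (f := fun φ : ContFun X => φ.1 x)).symm,
      Set.image_image, h1]
  exact heq ▸ hlub

lemma bwd_eval_cont {s : ContFun Y → ContFun X} (hs : ScottContinuous s) (x : X) :
    ScottContinuous fun g => (s g).1 x := by
  intro D hD hDdir G hG
  have hp : ScottContinuous (fun y => ⨆ f : (s '' D), (f : ContFun X).1 y) :=
    scottContinuous_iSup (fun f : (s '' D) => f.1.2)
  have heval := eval_of_isLUB (hs hD hDdir hG) hp x
  have key : (s G).1 x = sSup ((fun g => (s g).1 x) '' D) := by
    rw [heval, (sSup_image' (s := s '' D) (f := fun φ : ContFun X => φ.1 x)).symm,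
      Set.image_image]
  simpa [key] using isLUB_sSup ((fun g => (s g).1 x) '' D)

noncomputable def bwdFun (s : ContFun Y → ContFun X) (hs : ScottContinuous s)
    (hadd : ∀ g h : ContFun Y, s (g + h) = s g + s h)
    (hsmul : ∀ (r : ℝ≥0∞) (g : ContFun Y), s (r • g) = r • s g) (x : X) :
    ProbPowerdomain Y :=
  ⟨fun g => (s g).1 x, bwd_eval_cont hs x,
    fun g h => by show (s (g + h)).1 x = _; rw [hadd]; rfl,
    fun r g => by show (s (r • g)).1 x = _; rw [hsmul]; rfl⟩

lemma bwd_cont {s : ContFun Y → ContFun X} (hs : ScottContinuous s)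
    (hadd : ∀ g h : ContFun Y, s (g + h) = s g + s h)
    (hsmul : ∀ (r : ℝ≥0∞) (g : ContFun Y), s (r • g) = r • s g) :
    ScottContinuous (bwdFun s hs hadd hsmul) := by
  intro d hd hdir a ha
  have hmono : Monotone (bwdFun s hs hadd hsmul) := by
    intro x y hxy
    show (fun g => (s g).1 x) ≤ fun g => (s g).1 y
    intro g
    exact (s g).2.monotone hxy
  have hS : DirectedOn (· ≤ ·) (bwdFun s hs hadd hsmul '' d) := by
    rintro _ ⟨x, hx, rfl⟩ _ ⟨y, hy, rfl⟩
    obtain ⟨z, hz, h1, h2⟩ := hdir x hx y hy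
    exact ⟨_, mem_image_of_mem _ hz, hmono h1, hmono h2⟩
  have hp := sup_mem_prob (bwdFun s hs hadd hsmul '' d) hS
  have hlub := isLUB_subtype (bwdFun s hs hadd hsmul '' d) hp
  have heq : bwdFun s hs hadd hsmul a =
      ⟨fun g => ⨆ φ : (bwdFun s hs hadd hsmul '' d), (φ : ProbPowerdomain Y).1 g, hp⟩ := by
    apply Subtype.ext
    funext g
    show (s g).1 a = ⨆ φ : (bwdFun s hs hadd hsmul '' d), (φ : ProbPowerdomain Y).1 g
    have h1 : (s g).1 a = sSup ((s g).1 '' d) := ((s g).2 hd hdir ha).sSup_eq.symm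
    rw [(sSup_image' (s := bwdFun s hs hadd hsmul '' d)
      (f := fun φ : ProbPowerdomain Y => φ.1 g)).symm, Set.image_image, h1]
    rfl
  exact heq ▸ hlub

end Main
end PSPB

/-- There is a bijection between Scott-continuous maps `t : X → V(Y)` and Scott-continuous
linear maps `s : [Y →c ℝ≥0∞] → [X →c ℝ≥0∞]`, given by `s(g)(x) = t(x)(g)`. -/
theorem prob_state_predicate_bijection {X Y : Type*} [PartialOrder X] [PartialOrder Y]
    (hX : IsDcpo X) (hY : IsDcpo Y) :
    ∃ e : {t : X → ProbPowerdomain Y // ScottContinuous t} ≃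
          {s : ContFun Y → ContFun X // ScottContinuous s ∧
            (∀ g h : ContFun Y, s (g + h) = s g + s h) ∧
            (∀ (r : ℝ≥0∞) (g : ContFun Y), s (r • g) = r • s g)},
      ∀ (t : {t : X → ProbPowerdomain Y // ScottContinuous t}) (g : ContFun Y) (x : X),
        ((e t).1 g).1 x = (t.1 x).1 g := by

  refine ⟨⟨fun t => ⟨fun g => ⟨fun x => (t.1 x).1 g, PSPB.fwd_eval_cont t.2 g⟩,
      PSPB.fwd_s_cont t.2,
      fun g h => Subtype.ext (funext fun x => (t.1 x).2.2.1 g h),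
      fun r g => Subtype.ext (funext fun x => (t.1 x).2.2.2 r g)⟩,
    fun s => ⟨PSPB.bwdFun s.1 s.2.1 s.2.2.1 s.2.2.2, PSPB.bwd_cont s.2.1 s.2.2.1 s.2.2.2⟩,
    ?_, ?_⟩, fun t g x => rfl⟩
  · intro t
    apply Subtype.ext
    funext x
    apply Subtype.ext
    rfl
  · intro s
    apply Subtype.ext
    funext g
    apply Subtype.ext
    rfl
end

section
/- Let X and Y be dcpos and let t : X → ([Y →c ℝ≥0∞] → ℝ≥0∞) be such that each t(x) is Scott-continuous and sublinear, and x ↦ t(x)(g) is Scott-continuous for every g ∈ [Y →c ℝ≥0∞]. Then for every Scott-continuous sublinear functional φ : [X →c ℝ≥0∞] → ℝ≥0∞, the Kleisli lifting t†(φ) defined by t†(φ)(g) = φ(x ↦ t(x)(g)) is again a Scott-continuous sublinear functional on [Y →c ℝ≥0∞]. -/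
open Set ENNReal

/-- A functional `φ : [X →c ℝ≥0∞] → ℝ≥0∞` is sublinear if it is homogeneous and
subadditive. -/
def IsSublinearFunctional {X : Type*} [Preorder X] (φ : ContFun X → ℝ≥0∞) : Prop :=
  (∀ (r : ℝ≥0∞) (f : ContFun X), φ (r • f) = r * φ f) ∧
  (∀ f g : ContFun X, φ (f + g) ≤ φ f + φ g)

/-- The Kleisli lifting `t†(φ)(g) = φ(x ↦ t(x)(g))` of a state transformer `t` whose values
are Scott-continuous sublinear functionals maps Scott-continuous sublinear functionals to
Scott-continuous sublinear functionals. -/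
theorem kleisli_lifting_preserves_sublinear {X Y : Type*} [PartialOrder X] [PartialOrder Y]
    (hX : IsDcpo X) (hY : IsDcpo Y)
    (t : X → ContFun Y → ℝ≥0∞)
    (ht : ∀ x, ScottContinuous (t x) ∧ IsSublinearFunctional (t x))
    (ht' : ∀ g : ContFun Y, ScottContinuous fun x => t x g)
    (φ : ContFun X → ℝ≥0∞) (hφ : ScottContinuous φ) (hφs : IsSublinearFunctional φ) :
    ScottContinuous (fun g : ContFun Y => φ ⟨fun x => t x g, ht' g⟩) ∧
    IsSublinearFunctional (fun g : ContFun Y => φ ⟨fun x => t x g, ht' g⟩) := by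
  classical
  set F : ContFun Y → ContFun X := fun g => ⟨fun x => t x g, ht' g⟩ with hF
  have hFmono : Monotone F := by
    intro g h hgh x
    exact ((ht x).1.monotone) hgh
  have hFlub : ∀ d : Set (ContFun Y), d.Nonempty → DirectedOn (· ≤ ·) d →
      ∀ a, IsLUB d a → IsLUB (F '' d) (F a) := by
    intro d hd hdir a ha
    constructor
    · rintro _ ⟨g, hg, rfl⟩
      exact hFmono (ha.1 hg)
    · rintro b hb x
      have hx : IsLUB ((fun g => t x g) '' d) (t x a) := (ht x).1 hd hdir ha
      apply hx.2
      rintro _ ⟨g, hg, rfl⟩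
      exact hb ⟨g, hg, rfl⟩ x
  refine ⟨?_, ?_, ?_⟩
  · intro d hd hdir a ha
    have h1 : IsLUB (φ '' (F '' d)) (φ (F a)) :=
      hφ (hd.image F) (by
        rintro _ ⟨g, hg, rfl⟩ _ ⟨h, hh, rfl⟩
        obtain ⟨k, hk, hgk, hhk⟩ := hdir g hg h hh
        exact ⟨F k, ⟨k, hk, rfl⟩, hFmono hgk, hFmono hhk⟩) (hFlub d hd hdir a ha)
    rw [Set.image_image] at h1
    exact h1
  · intro r g
    have : F (r • g) = r • F g := by
      apply Subtype.ext
      funext x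
      exact (ht x).2.1 r g
    show φ (F (r • g)) = r * φ (F g)
    rw [this, hφs.1]
  · intro g h
    have hle : F (g + h) ≤ F g + F h := by
      intro x
      exact (ht x).2.2 g h
    calc φ (F (g + h)) ≤ φ (F g + F h) := hφ.monotone hle
      _ ≤ φ (F g) + φ (F h) := hφs.2 _ _
end

section
/- Let X and Y be dcpos and let HV(Y) denote the dcpo of Scott-continuous sublinear functionals on [Y →c ℝ≥0∞] with the pointwise order. There is a bijection between (i) Scott-continuous maps t : X → HV(Y) and (ii) Scott-continuous sublinear maps s : [Y →c ℝ≥0∞] → [X →c ℝ≥0∞] (i.e., s(r•g) = r•s(g) and s(g + h) ≤ s(g) + s(h) pointwise, for all g, h and r ∈ ℝ≥0∞), the correspondence being given by s(g)(x) = t(x)(g). -/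
open Set ENNReal

/-- The powerdomain `HV(Y)`: Scott-continuous sublinear functionals on `[Y →c ℝ≥0∞]`, with
the pointwise order. -/
abbrev SublinearPowerdomain (Y : Type*) [Preorder Y] : Type _ :=
  {φ : ContFun Y → ℝ≥0∞ // ScottContinuous φ ∧ IsSublinearFunctional φ}


section Helpers

open Set ENNReal

lemma mySupImage {α β : Type*} (D : Set α) (F : α → β) (G : β → ℝ≥0∞) :
    ⨆ f : (F '' D), G f.1 = ⨆ g : D, G (F g.1) := by
  calc ⨆ f : (F '' D), G f.1 = sSup (G '' (F '' D)) := sSup_image'.symm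
    _ = sSup ((G ∘ F) '' D) := by rw [image_comp]
    _ = ⨆ g : D, G (F g.1) := sSup_image'

lemma myScottContinuous_iSup {Z ι : Type*} [Preorder Z] (F : ι → Z → ℝ≥0∞)
    (hF : ∀ i, ScottContinuous (F i)) : ScottContinuous fun z => ⨆ i, F i z := by
  intro d hd hdir a ha
  have key : (⨆ i, F i a) = sSup ((fun z => ⨆ i, F i z) '' d) := by
    rw [sSup_image']
    have h1 : ∀ i, F i a = ⨆ z : d, F i z := fun i => by
      rw [← ((hF i) hd hdir ha).sSup_eq, sSup_image']
    simp_rw [h1]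
    exact iSup_comm
  simpa [key] using isLUB_sSup ((fun z => ⨆ i, F i z) '' d)

lemma myIsSublinear_iSup {Y ι : Type*} [Preorder Y] (F : ι → ContFun Y → ℝ≥0∞)
    (hF : ∀ i, IsSublinearFunctional (F i)) :
    IsSublinearFunctional fun g => ⨆ i, F i g := by
  constructor
  · intro r f
    simp only [fun i => (hF i).1 r f]
    rw [ENNReal.mul_iSup]
  · intro f g
    refine le_trans (iSup_mono fun i => (hF i).2 f g) ?_
    exact iSup_le fun i => add_le_add (le_iSup (fun i => F i f) i) (le_iSup (fun i => F i g) i)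

lemma myIsLUB_of_eval {ι : Type*} {p : (ι → ℝ≥0∞) → Prop} {S : Set {f // p f}} {φ : {f // p f}}
    (h : ∀ i, φ.1 i = ⨆ f : S, f.1.1 i) : IsLUB S φ := by
  constructor
  · intro f hf
    show f.1 ≤ φ.1
    intro i
    rw [h i]
    exact le_iSup (fun f : S => f.1.1 i) ⟨f, hf⟩
  · intro u hu
    show φ.1 ≤ u.1
    intro i
    rw [h i]
    exact iSup_le fun f => hu f.2 i

lemma myEval_of_isLUB {ι : Type*} {p : (ι → ℝ≥0∞) → Prop} {S : Set {f // p f}} {φ : {f // p f}}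
    (hφ : IsLUB S φ) (hsup : p fun i => ⨆ f : S, f.1.1 i) (i : ι) :
    φ.1 i = ⨆ f : S, f.1.1 i := by
  have h := hφ.unique (myIsLUB_of_eval (φ := ⟨fun i => ⨆ f : S, f.1.1 i, hsup⟩) fun _ => rfl)
  rw [h]

variable {X Y : Type*} [PartialOrder X] [PartialOrder Y]

/-- Continuity of `x ↦ t x g` for continuous `t`. -/
lemma myContEval (t : X → SublinearPowerdomain Y) (ht : ScottContinuous t) (g : ContFun Y) :
    ScottContinuous fun x => (t x).1 g := by
  intro d hd hdir a ha
  have h1 : IsLUB (t '' d) (t a) := ht hd hdir ha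
  have hsup : ScottContinuous (fun f : ContFun Y => ⨆ φ : (t '' d), φ.1.1 f) ∧
      IsSublinearFunctional (fun f : ContFun Y => ⨆ φ : (t '' d), φ.1.1 f) :=
    ⟨myScottContinuous_iSup _ (fun φ => φ.1.2.1), myIsSublinear_iSup _ (fun φ => φ.1.2.2)⟩
  have h2 : (t a).1 g = ⨆ φ : (t '' d), φ.1.1 g := myEval_of_isLUB h1 hsup g
  have key : (t a).1 g = sSup ((fun x => (t x).1 g) '' d) := by
    rw [h2, mySupImage d t (fun φ => φ.1 g), sSup_image']
  simpa [key] using isLUB_sSup ((fun x => (t x).1 g) '' d)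

/-- Forward map. -/
noncomputable def myToS (t : {t : X → SublinearPowerdomain Y // ScottContinuous t}) :
    ContFun Y → ContFun X := fun g => ⟨fun x => (t.1 x).1 g, myContEval t.1 t.2 g⟩

lemma myToS_cont (t : {t : X → SublinearPowerdomain Y // ScottContinuous t}) :
    ScottContinuous (myToS t) := by
  intro D hD hdir G hG
  refine myIsLUB_of_eval (p := ScottContinuous) (S := myToS t '' D) (φ := myToS t G) fun x => ?_
  have h1 : IsLUB ((t.1 x).1 '' D) ((t.1 x).1 G) := (t.1 x).2.1 hD hdir hG
  show (t.1 x).1 G = ⨆ f : (myToS t '' D), f.1.1 x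
  rw [mySupImage D (myToS t) (fun f => f.1 x)]
  show (t.1 x).1 G = ⨆ g : D, (t.1 x).1 g.1
  rw [← sSup_image' (f := (t.1 x).1), h1.sSup_eq]

lemma myEvalS (s : ContFun Y → ContFun X) (hs : ScottContinuous s) (x : X)
    {D : Set (ContFun Y)} {G : ContFun Y} (hD : D.Nonempty) (hdir : DirectedOn (· ≤ ·) D)
    (hG : IsLUB D G) : (s G).1 x = ⨆ g : D, (s g.1).1 x := by
  have h1 : IsLUB (s '' D) (s G) := hs hD hdir hG
  have hsup : ScottContinuous (fun x : X => ⨆ f : (s '' D), f.1.1 x) :=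
    myScottContinuous_iSup _ (fun f => f.1.2)
  have h2 := myEval_of_isLUB (p := ScottContinuous) h1 hsup x
  rw [h2, mySupImage D s (fun f => f.1 x)]

/-- Inverse map. -/
noncomputable def myToT
    (s : {s : ContFun Y → ContFun X // ScottContinuous s ∧
      (∀ (r : ℝ≥0∞) (g : ContFun Y), s (r • g) = r • s g) ∧
      (∀ g h : ContFun Y, s (g + h) ≤ s g + s h)}) :
    X → SublinearPowerdomain Y := fun x =>
  ⟨fun g => (s.1 g).1 x, by
    constructor
    · intro D hD hdir G hG
      have key : (s.1 G).1 x = sSup ((fun g => (s.1 g).1 x) '' D) := by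
        rw [myEvalS s.1 s.2.1 x hD hdir hG, sSup_image']
      simpa [key] using isLUB_sSup ((fun g => (s.1 g).1 x) '' D)
    · constructor
      · intro r g
        have := congrFun (congrArg Subtype.val (s.2.2.1 r g)) x
        simpa using this
      · intro g h
        exact s.2.2.2 g h x⟩

lemma myToT_cont
    (s : {s : ContFun Y → ContFun X // ScottContinuous s ∧
      (∀ (r : ℝ≥0∞) (g : ContFun Y), s (r • g) = r • s g) ∧
      (∀ g h : ContFun Y, s (g + h) ≤ s g + s h)}) :
    ScottContinuous (myToT s) := by
  intro d hd hdir a ha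
  refine myIsLUB_of_eval (S := myToT s '' d) (φ := myToT s a) fun g => ?_
  have h1 : IsLUB ((s.1 g).1 '' d) ((s.1 g).1 a) := (s.1 g).2 hd hdir ha
  show (s.1 g).1 a = ⨆ f : (myToT s '' d), f.1.1 g
  rw [mySupImage d (myToT s) (fun f => f.1 g)]
  show (s.1 g).1 a = ⨆ x : d, (s.1 g).1 x.1
  rw [← sSup_image' (f := (s.1 g).1), h1.sSup_eq]

end Helpers

/-- There is a bijection between Scott-continuous maps `t : X → HV(Y)` and Scott-continuous
sublinear maps `s : [Y →c ℝ≥0∞] → [X →c ℝ≥0∞]`, given by `s(g)(x) = t(x)(g)`. -/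
theorem sublinear_state_predicate_bijection {X Y : Type*} [PartialOrder X] [PartialOrder Y]
    (hX : IsDcpo X) (hY : IsDcpo Y) :
    ∃ e : {t : X → SublinearPowerdomain Y // ScottContinuous t} ≃
          {s : ContFun Y → ContFun X // ScottContinuous s ∧
            (∀ (r : ℝ≥0∞) (g : ContFun Y), s (r • g) = r • s g) ∧
            (∀ g h : ContFun Y, s (g + h) ≤ s g + s h)},
      ∀ (t : {t : X → SublinearPowerdomain Y // ScottContinuous t}) (g : ContFun Y) (x : X),
        ((e t).1 g).1 x = (t.1 x).1 g := by
  refine ⟨⟨fun t => ⟨myToS t, myToS_cont t, ?_, ?_⟩, fun s => ⟨myToT s, myToT_cont s⟩,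
      ?_, ?_⟩, fun t g x => rfl⟩
  · intro r g
    exact Subtype.ext (funext fun x => (t.1 x).2.2.1 r g)
  · intro g h
    exact fun x => (t.1 x).2.2.2 g h
  · intro t
    exact Subtype.ext (funext fun x => Subtype.ext rfl)
  · intro s
    exact Subtype.ext (funext fun g => Subtype.ext rfl)
end

section
/- Let X and Y be dcpos and let SV(Y) denote the dcpo of Scott-continuous superlinear functionals on [Y →c ℝ≥0∞] with the pointwise order. There is a bijection between (i) Scott-continuous maps t : X → SV(Y) and (ii) Scott-continuous superlinear maps s : [Y →c ℝ≥0∞] → [X →c ℝ≥0∞] (i.e., s(r•g) = r•s(g) and s(g + h) ≥ s(g) + s(h) pointwise, for all g, h and r ∈ ℝ≥0∞), the correspondence being given by s(g)(x) = t(x)(g). -/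
open Set ENNReal

/-- A functional `φ : [X →c ℝ≥0∞] → ℝ≥0∞` is superlinear if it is homogeneous and
superadditive. -/
def IsSuperlinearFunctional {X : Type*} [Preorder X] (φ : ContFun X → ℝ≥0∞) : Prop :=
  (∀ (r : ℝ≥0∞) (f : ContFun X), φ (r • f) = r * φ f) ∧
  (∀ f g : ContFun X, φ f + φ g ≤ φ (f + g))

/-- The powerdomain `SV(Y)`: Scott-continuous superlinear functionals on `[Y →c ℝ≥0∞]`,
with the pointwise order. -/
abbrev SuperlinearPowerdomain (Y : Type*) [Preorder Y] : Type _ :=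
  {φ : ContFun Y → ℝ≥0∞ // ScottContinuous φ ∧ IsSuperlinearFunctional φ}


section Aux

/-- pointwise sup of Scott-continuous functions into ℝ≥0∞ is Scott-continuous. -/
lemma myScottContinuous_iSup_s17 {α : Type*} [Preorder α] {ι : Sort*} (f : ι → α → ℝ≥0∞)
    (hf : ∀ i, ScottContinuous (f i)) : ScottContinuous fun x => ⨆ i, f i x := by
  intro e he hedir a ha
  haveI : Nonempty e := he.to_subtype
  have key : (⨆ i, f i a) = sSup ((fun x => ⨆ i, f i x) '' e) := by
    rw [sSup_image']
    have h1 : ∀ i, f i a = ⨆ x : e, f i x := fun i => by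
      rw [← ((hf i) he hedir ha).sSup_eq, sSup_image']
    calc (⨆ i, f i a) = ⨆ i, ⨆ x : e, f i x := by simp_rw [h1]
      _ = ⨆ x : e, ⨆ i, f i x := iSup_comm
  have h2 := isLUB_sSup ((fun x => ⨆ i, f i x) '' e)
  rwa [← key] at h2

lemma myiSup_image_subtype {β δ γ : Type*} [CompleteLattice γ] {s : Set β} {f : β → δ}
    (g : δ → γ) : (⨆ y : ↥(f '' s), g y.1) = ⨆ x : s, g (f x.1) := by
  apply le_antisymm
  · refine iSup_le ?_
    rintro ⟨y, hy⟩
    obtain ⟨x, hx, rfl⟩ := hy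
    exact le_iSup (fun x : s => g (f x.1)) ⟨x, hx⟩
  · refine iSup_le ?_
    rintro ⟨x, hx⟩
    exact le_iSup_of_le ⟨f x, Set.mem_image_of_mem _ hx⟩ le_rfl

/-- An element of the powerdomain which is the LUB of a nonempty directed family. -/
lemma exists_isLUB_SV {Y : Type*} [Preorder Y] {D : Set (SuperlinearPowerdomain Y)}
    (hne : D.Nonempty) (hdir : DirectedOn (· ≤ ·) D) :
    ∃ S : SuperlinearPowerdomain Y, IsLUB D S ∧ ∀ g, S.1 g = ⨆ φ : D, φ.1.1 g := by
  haveI : Nonempty D := hne.to_subtype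
  refine ⟨⟨fun g => ⨆ φ : D, φ.1.1 g, ?_, ?_, ?_⟩, ⟨?_, ?_⟩, fun g => rfl⟩
  · exact myScottContinuous_iSup_s17 _ (fun φ => φ.1.2.1)
  · intro r f
    have h1 : ∀ φ : D, φ.1.1 (r • f) = r * φ.1.1 f := fun φ => φ.1.2.2.1 r f
    simp_rw [h1]
    exact (ENNReal.mul_iSup _ _).symm
  · intro f g
    calc (⨆ φ : D, φ.1.1 f) + ⨆ φ : D, φ.1.1 g
        = ⨆ φ : D, (φ.1.1 f + φ.1.1 g) := by
          refine ENNReal.iSup_add_iSup ?_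
          intro i j
          obtain ⟨k, hk, hik, hjk⟩ := hdir i.1 i.2 j.1 j.2
          exact ⟨⟨k, hk⟩, add_le_add (hik f) (hjk g)⟩
      _ ≤ ⨆ φ : D, φ.1.1 (f + g) := iSup_mono fun φ => φ.1.2.2.2 f g
  · intro φ hφ
    exact fun g => le_iSup (fun ψ : D => ψ.1.1 g) ⟨φ, hφ⟩
  · intro b hb
    exact fun g => iSup_le fun φ => hb φ.2 g

/-- An element of ContFun which is the LUB of any family. -/
lemma exists_isLUB_CF {α : Type*} [Preorder α] (D : Set (ContFun α)) :
    ∃ S : ContFun α, IsLUB D S ∧ ∀ x, S.1 x = ⨆ f : D, f.1.1 x := by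
  refine ⟨⟨fun x => ⨆ f : D, f.1.1 x, ?_⟩, ⟨?_, ?_⟩, fun x => rfl⟩
  · exact myScottContinuous_iSup_s17 _ (fun f => f.1.2)
  · intro f hf
    exact fun x => le_iSup (fun g : D => g.1.1 x) ⟨f, hf⟩
  · intro b hb
    exact fun x => iSup_le fun f => hb f.2 x

variable {X Y : Type*} [PartialOrder X] [PartialOrder Y]

/-- forward map: the function g ↦ (x ↦ t x g) lands in ContFun X. -/
noncomputable def fwdFun (t : {t : X → SuperlinearPowerdomain Y // ScottContinuous t})
    (g : ContFun Y) : ContFun X := by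
  refine ⟨fun x => (t.1 x).1 g, ?_⟩
  intro d hd hdir a ha
  haveI : Nonempty d := hd.to_subtype
  have hdir' : DirectedOn (· ≤ ·) (t.1 '' d) := by
    rintro _ ⟨i, hi, rfl⟩ _ ⟨j, hj, rfl⟩
    obtain ⟨k, hk, hik, hjk⟩ := hdir i hi j hj
    exact ⟨t.1 k, Set.mem_image_of_mem _ hk, t.2.monotone hik, t.2.monotone hjk⟩
  obtain ⟨S, hS, hSg⟩ := exists_isLUB_SV (hd.image t.1) hdir'
  have heq : t.1 a = S := (t.2 hd hdir ha).unique hS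
  have key : (t.1 a).1 g = sSup ((fun x => (t.1 x).1 g) '' d) := by
    rw [sSup_image', heq, hSg,
      myiSup_image_subtype (s := d) (f := t.1) (fun φ : SuperlinearPowerdomain Y => φ.1 g)]
  have h2 := isLUB_sSup ((fun x => (t.1 x).1 g) '' d)
  rwa [← key] at h2

lemma fwd_scott (t : {t : X → SuperlinearPowerdomain Y // ScottContinuous t}) :
    ScottContinuous (fwdFun t) := by
  intro d hd hdir G hG
  haveI : Nonempty d := hd.to_subtype
  obtain ⟨S, hS, hSx⟩ := exists_isLUB_CF (fwdFun t '' d)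
  have heq : fwdFun t G = S := by
    refine Subtype.ext (funext fun x => ?_)
    have h1 : (t.1 x).1 G = sSup ((t.1 x).1 '' d) := ((t.1 x).2.1 hd hdir hG).sSup_eq.symm
    rw [hSx, myiSup_image_subtype (s := d) (f := fwdFun t) (fun f : ContFun X => f.1 x)]
    show (t.1 x).1 G = ⨆ g : d, (fwdFun t g.1).1 x
    rw [h1, sSup_image']
    rfl
  rw [heq]; exact hS

noncomputable def fwd (t : {t : X → SuperlinearPowerdomain Y // ScottContinuous t}) :
    {s : ContFun Y → ContFun X // ScottContinuous s ∧
      (∀ (r : ℝ≥0∞) (g : ContFun Y), s (r • g) = r • s g) ∧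
      (∀ g h : ContFun Y, s g + s h ≤ s (g + h))} := by
  refine ⟨fwdFun t, fwd_scott t, ?_, ?_⟩
  · intro r g
    exact Subtype.ext (funext fun x => (t.1 x).2.2.1 r g)
  · intro g h
    exact fun x => (t.1 x).2.2.2 g h

/-- backward map -/
noncomputable def bwdFun (s : {s : ContFun Y → ContFun X // ScottContinuous s ∧
      (∀ (r : ℝ≥0∞) (g : ContFun Y), s (r • g) = r • s g) ∧
      (∀ g h : ContFun Y, s g + s h ≤ s (g + h))}) (x : X) : SuperlinearPowerdomain Y := by
  refine ⟨fun g => (s.1 g).1 x, ?_, ?_, ?_⟩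
  · intro d hd hdir G hG
    haveI : Nonempty d := hd.to_subtype
    obtain ⟨S, hS, hSx⟩ := exists_isLUB_CF (s.1 '' d)
    have heq : s.1 G = S := (s.2.1 hd hdir hG).unique hS
    have key : (s.1 G).1 x = sSup ((fun g => (s.1 g).1 x) '' d) := by
      rw [sSup_image', heq, hSx,
        myiSup_image_subtype (s := d) (f := s.1) (fun f : ContFun X => f.1 x)]
    have h2 := isLUB_sSup ((fun g => (s.1 g).1 x) '' d)
    rwa [← key] at h2
  · intro r g
    show (s.1 (r • g)).1 x = r * (s.1 g).1 x
    rw [s.2.2.1 r g]; rfl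
  · intro g h
    exact s.2.2.2 g h x

lemma bwd_scott (s : {s : ContFun Y → ContFun X // ScottContinuous s ∧
      (∀ (r : ℝ≥0∞) (g : ContFun Y), s (r • g) = r • s g) ∧
      (∀ g h : ContFun Y, s g + s h ≤ s (g + h))}) : ScottContinuous (bwdFun s) := by
  intro d hd hdir a ha
  constructor
  · rintro _ ⟨x, hx, rfl⟩
    exact fun g => (s.1 g).2.monotone (ha.1 hx)
  · intro b hb
    intro g
    have h1 : (s.1 g).1 a = sSup ((s.1 g).1 '' d) := ((s.1 g).2 hd hdir ha).sSup_eq.symm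
    show (s.1 g).1 a ≤ b.1 g
    rw [h1]
    refine sSup_le ?_
    rintro _ ⟨x, hx, rfl⟩
    exact hb (Set.mem_image_of_mem _ hx) g

noncomputable def bwd (s : {s : ContFun Y → ContFun X // ScottContinuous s ∧
      (∀ (r : ℝ≥0∞) (g : ContFun Y), s (r • g) = r • s g) ∧
      (∀ g h : ContFun Y, s g + s h ≤ s (g + h))}) :
    {t : X → SuperlinearPowerdomain Y // ScottContinuous t} := ⟨bwdFun s, bwd_scott s⟩

end Aux

/-- There is a bijection between Scott-continuous maps `t : X → SV(Y)` and Scott-continuous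
superlinear maps `s : [Y →c ℝ≥0∞] → [X →c ℝ≥0∞]`, given by `s(g)(x) = t(x)(g)`. -/
theorem superlinear_state_predicate_bijection {X Y : Type*} [PartialOrder X] [PartialOrder Y]
    (hX : IsDcpo X) (hY : IsDcpo Y) :
    ∃ e : {t : X → SuperlinearPowerdomain Y // ScottContinuous t} ≃
          {s : ContFun Y → ContFun X // ScottContinuous s ∧
            (∀ (r : ℝ≥0∞) (g : ContFun Y), s (r • g) = r • s g) ∧
            (∀ g h : ContFun Y, s g + s h ≤ s (g + h))},
      ∀ (t : {t : X → SuperlinearPowerdomain Y // ScottContinuous t}) (g : ContFun Y) (x : X),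
        ((e t).1 g).1 x = (t.1 x).1 g := by
  refine ⟨⟨fwd, bwd, ?_, ?_⟩, fun t g x => rfl⟩
  · intro t
    exact Subtype.ext (funext fun x => Subtype.ext (funext fun g => rfl))
  · intro s
    exact Subtype.ext (funext fun g => Subtype.ext (funext fun x => rfl))
end

section
/- A function f : ℝ≥0∞ → ℝ≥0∞ is a Scott-continuous endomorphism of the monoid (ℝ≥0∞, +, 0) — that is, f(0) = 0, f(x + y) = f(x) + f(y) for all x, y, and f is monotone and preserves suprema of nonempty directed subsets — if and only if there exists r ∈ ℝ≥0∞ such that f(x) = r·x for all x ∈ ℝ≥0∞. -/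
open Set ENNReal

private theorem ennreal_rat_btwn (y x : ℝ≥0∞) (h : y < x) :
    ∃ m n : ℕ, 0 < n ∧ y < (m:ℝ≥0∞)/n ∧ (m:ℝ≥0∞)/n < x := by
  obtain ⟨q, hq0, h1, h2⟩ := ENNReal.lt_iff_exists_rat_btwn.1 h
  have key : (Real.toNNReal q : ℝ≥0∞) = (q.num.toNat : ℝ≥0∞) / q.den := by
    show ENNReal.ofReal q = _
    have hq : (q : ℝ) = (q.num.toNat : ℝ) / (q.den : ℝ) := by
      rw [Rat.cast_def]
      congr 1
      exact_mod_cast (Int.toNat_of_nonneg (Rat.num_nonneg.2 hq0)).symm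
    rw [hq, ENNReal.ofReal_div_of_pos (by exact_mod_cast q.pos),
      ENNReal.ofReal_natCast, ENNReal.ofReal_natCast]
  exact ⟨q.num.toNat, q.den, q.pos, key ▸ h1, key ▸ h2⟩

/-- A function `f : ℝ≥0∞ → ℝ≥0∞` is a Scott-continuous endomorphism of the monoid
`(ℝ≥0∞, +, 0)` — i.e. `f 0 = 0`, `f` is additive, monotone, and preserves suprema of
nonempty directed subsets — if and only if it is multiplication by some `r ∈ ℝ≥0∞`. -/
theorem ennreal_scott_monoid_endomorphisms (f : ℝ≥0∞ → ℝ≥0∞) :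
    (f 0 = 0 ∧ (∀ x y : ℝ≥0∞, f (x + y) = f x + f y) ∧ Monotone f ∧
      (∀ d : Set ℝ≥0∞, d.Nonempty → DirectedOn (· ≤ ·) d → f (sSup d) = sSup (f '' d)))
    ↔ ∃ r : ℝ≥0∞, ∀ x, f x = r * x := by
  constructor
  · rintro ⟨h0, hadd, hmono, hsup⟩
    refine ⟨f 1, fun x => ?_⟩
    -- f (n * x) = n * f x
    have hnat : ∀ (n : ℕ) (x : ℝ≥0∞), f (n * x) = n * f x := by
      intro n
      induction n with
      | zero => simpa using h0
      | succ k ih => intro x; push_cast; rw [add_mul, add_mul, one_mul, hadd, ih, one_mul]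
    -- f on nonnegative "rationals"
    have hrat : ∀ m n : ℕ, 0 < n → f ((m : ℝ≥0∞) / n) = f 1 * ((m : ℝ≥0∞) / n) := by
      intro m n hn
      have hn0 : (n : ℝ≥0∞) ≠ 0 := by exact_mod_cast hn.ne'
      have hnt : (n : ℝ≥0∞) ≠ ∞ := natCast_ne_top n
      rw [← ENNReal.mul_right_inj hn0 hnt]
      calc (n : ℝ≥0∞) * f ((m : ℝ≥0∞) / n) = f (n * ((m : ℝ≥0∞) / n)) := (hnat n _).symm
        _ = f ((m : ℝ≥0∞) * 1) := by rw [ENNReal.mul_div_cancel hn0 hnt, mul_one]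
        _ = (m : ℝ≥0∞) * f 1 := hnat m 1
        _ = (n : ℝ≥0∞) * (f 1 * ((m : ℝ≥0∞) / n)) := by
            rw [← mul_comm (f 1), ← mul_assoc, mul_comm (n : ℝ≥0∞),
              mul_assoc, ENNReal.mul_div_cancel hn0 hnt]
    rcases eq_or_ne x 0 with rfl | hx
    · simpa using h0
    · -- the set of rationals below x
      set d : Set ℝ≥0∞ := {y | (∃ m n : ℕ, 0 < n ∧ y = (m : ℝ≥0∞) / n) ∧ y < x} with hd
      have hne : d.Nonempty := ⟨0, ⟨0, 1, one_pos, by simp⟩, pos_iff_ne_zero.2 hx⟩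
      have hdir : DirectedOn (· ≤ ·) d := fun a ha b hb =>
        ⟨max a b, max_rec' (· ∈ d) ha hb, le_max_left a b, le_max_right a b⟩
      have hsd : sSup d = x := by
        refine le_antisymm (sSup_le fun y hy => hy.2.le) ?_
        by_contra hlt
        obtain ⟨m, n, hn, h1, h2⟩ := ennreal_rat_btwn _ _ (lt_of_not_ge hlt)
        exact absurd (le_sSup (show (m:ℝ≥0∞)/n ∈ d from ⟨⟨m, n, hn, rfl⟩, h2⟩)) h1.not_ge
      have : f x = sSup (f '' d) := by rw [← hsd]; exact hsup d hne hdir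
      rw [this, ← hsd]
      have himg : f '' d = (fun y => f 1 * y) '' d := by
        apply image_congr
        rintro y ⟨⟨m, n, hn, rfl⟩, _⟩
        exact hrat m n hn
      rw [himg, ENNReal.mul_sSup]
      rw [sSup_image]
  · rintro ⟨r, hr⟩
    refine ⟨by simp [hr], fun x y => by simp [hr, mul_add], fun a b hab => by
      simp only [hr]; exact mul_le_mul_right hab r, fun d hne hdir => ?_⟩
    have : f '' d = (fun y => r * y) '' d := image_congr fun y _ => hr y
    rw [hr, this, ENNReal.mul_sSup, sSup_image]
end
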